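/- arXiv:2202.02103 — 6 statements merged into one kernel-verified Lean document; each statement's English description precedes it below -/
import Mathlib

section
/- For all natural numbers m ≥ 1 and n, the function N(m,n) = m·(n+m)^(n-1) satisfies the recursion N(m,n) = ∑_{k=0}^{n} C(n,k) · N(m+k-1, n-k). -/
/-- `N m n` = number of rooted labeled forests with `m` fixed roots and `n` other
vertices: `N m n = m * (n + m)^(n-1)` for `m, n ≥ 1`, with `N m 0 = 1` for `m ≥ 1`,
`N 0 0 = 1` and `N 0 n = 0` for `n ≥ 1`. -/
def forestCount (m n : ℕ) : ℕ :=
  if m = 0 then (if n = 0 then 1 else 0)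
  else if n = 0 then 1 else m * (n + m) ^ (n - 1)

lemma sumA (b n : ℕ) : ∑ k ∈ Finset.range (n+1), n.choose k * b^(n-k) = (b+1)^n := by
  have h := add_pow 1 b n
  simp only [one_pow, one_mul] at h
  rw [add_comm b 1, h]
  exact Finset.sum_congr rfl fun k _ => mul_comm _ _

lemma sumB (b n : ℕ) :
    ∑ k ∈ Finset.range (n+2), (n+1).choose k * k * b^(n+1-k) = (n+1)*(b+1)^n := by
  rw [Finset.sum_range_succ' _ (n+1)]
  simp only [Nat.mul_zero, Nat.zero_mul, Nat.add_zero, Nat.pow_zero, Nat.mul_one]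
  have : ∀ j ∈ Finset.range (n+1),
      (n+1).choose (j+1) * (j+1) * b^(n+1-(j+1)) = (n+1) * (n.choose j * b^(n-j)) := by
    intro j hj
    have he : n+1-(j+1) = n-j := by omega
    rw [he, ← Nat.add_one_mul_choose_eq, mul_assoc]
  rw [Finset.sum_congr rfl this, ← Finset.mul_sum, sumA]

/-- The function `N(m,n) = m (n+m)^(n-1)` satisfies the forest recursion
`N(m,n) = ∑_{k=0}^n C(n,k) N(m+k-1, n-k)` for `m ≥ 1`, `n ≥ 1`. -/
theorem forestCount_recursion (m n : ℕ) (hm : 1 ≤ m) (hn : 1 ≤ n) :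
    forestCount m n =
      ∑ k ∈ Finset.range (n + 1), n.choose k * forestCount (m + k - 1) (n - k) := by
  obtain ⟨m', rfl⟩ : ∃ m', m = m' + 1 := ⟨m - 1, by omega⟩
  obtain ⟨n', rfl⟩ : ∃ n', n = n' + 1 := ⟨n - 1, by omega⟩
  set b := n' + m' + 1 with hb
  -- simplify LHS
  have hL : forestCount (m' + 1) (n' + 1) = (m'+1) * (b+1)^n' := by
    have e1 : (n'+1)+(m'+1) = b+1 := by omega
    simp only [forestCount]
    rw [if_neg (by omega : ¬(m'+1 = 0)), if_neg (by omega : ¬(n'+1 = 0)), e1]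
    norm_num
  -- simplify RHS terms
  rw [hL, Finset.sum_range_succ]
  have hlast : forestCount (m' + 1 + (n'+1) - 1) (n' + 1 - (n'+1)) = 1 := by
    simp [forestCount]
  rw [hlast, Nat.mul_one]
  have hterm : ∀ k ∈ Finset.range (n'+1),
      (n'+1).choose k * forestCount (m' + 1 + k - 1) (n' + 1 - k) =
      (n'+1).choose k * ((m'+k) * b^(n'-k)) := by
    intro k hk
    simp only [Finset.mem_range] at hk
    congr 1
    have h1 : m' + 1 + k - 1 = m' + k := by omega
    rw [h1]
    simp only [forestCount]
    have h2 : n' + 1 - k ≠ 0 := by omega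
    have h3 : n' + 1 - k + (m' + k) = b := by omega
    have h4 : n' + 1 - k - 1 = n' - k := by omega
    rcases Nat.eq_zero_or_pos (m' + k) with h | h
    · simp [h, h2]
    · rw [if_neg (by omega), if_neg h2, h3, h4]
  rw [Finset.sum_congr rfl hterm]
  -- multiply both sides by b
  have hbpos : 0 < b := by omega
  apply Nat.eq_of_mul_eq_mul_left hbpos
  rw [Nat.mul_add, Nat.choose_self, Nat.mul_one, Finset.mul_sum]
  have hterm2 : ∀ k ∈ Finset.range (n'+1),
      b * ((n'+1).choose k * ((m'+k) * b^(n'-k))) =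
      (n'+1).choose k * (m'+k) * b^(n'+1-k) := by
    intro k hk
    simp only [Finset.mem_range] at hk
    have : n' + 1 - k = (n' - k) + 1 := by omega
    rw [this, pow_succ]
    ring
  rw [Finset.sum_congr rfl hterm2]
  have hfull : ∑ k ∈ Finset.range (n'+2), (n'+1).choose k * (m'+k) * b^(n'+1-k)
      = (∑ k ∈ Finset.range (n'+1), (n'+1).choose k * (m'+k) * b^(n'+1-k)) + b := by
    rw [Finset.sum_range_succ]
    simp only [Nat.choose_self, Nat.one_mul, Nat.sub_self, Nat.pow_zero, Nat.mul_one]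
    omega
  have hsplit : ∑ k ∈ Finset.range (n'+2), (n'+1).choose k * (m'+k) * b^(n'+1-k)
      = m' * (b+1)^(n'+1) + (n'+1) * (b+1)^n' := by
    have : ∀ k ∈ Finset.range (n'+2),
        (n'+1).choose k * (m'+k) * b^(n'+1-k) =
        m' * ((n'+1).choose k * b^(n'+1-k)) + (n'+1).choose k * k * b^(n'+1-k) := by
      intro k _; ring
    rw [Finset.sum_congr rfl this, Finset.sum_add_distrib, ← Finset.mul_sum, sumA, sumB]
  have : (∑ k ∈ Finset.range (n'+1), (n'+1).choose k * (m'+k) * b^(n'+1-k)) + b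
      = m' * (b+1)^(n'+1) + (n'+1) * (b+1)^n' := by
    rw [← hfull, hsplit]
  rw [this]
  -- final polynomial identity
  have hc : b * (m'+1) = m' * (b+1) + (n'+1) := by simp only [hb]; ring
  calc b * ((m'+1) * (b+1)^n') = (b * (m'+1)) * (b+1)^n' := by ring
    _ = (m' * (b+1) + (n'+1)) * (b+1)^n' := by rw [hc]
    _ = m' * (b+1)^(n'+1) + (n'+1) * (b+1)^n' := by rw [pow_succ]; ring
end

section
/- The number of rooted labeled forests on a vertex set of size m + n, with a distinguished set of m roots (one root per tree, every tree containing exactly one root), equals m·(m+n)^(n-1). -/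
/-!
A forest on `V` rooted at `R` is the same thing as a parent map `p : V → V` that fixes `R` and
eventually carries every vertex into `R`: the edges are the pairs `{v, p v}`, and conversely
`p v` is the second vertex of the unique path from `v` to the root of its component.

Sort the parent maps by the set `A ⊆ Rᶜ` of vertices whose parent is a root. Such a map is an
arbitrary map `A → R` together with a parent map on `Rᶜ` with root set `A`, so the number
`F m n` of parent maps with `m` roots and `n` non-roots satisfies
`F m n = ∑ k, C(n, k) m ^ k F k (n - k)` for `n ≥ 1`. Since `k C(n, k) = n C(n - 1, k - 1)`,
the binomial theorem shows that `m (m + n) ^ (n - 1)` satisfies the same recurrence.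
-/

open Finset SimpleGraph

variable {V : Type*}

structure IsParentMap (R : Finset V) (p : V → V) : Prop where
  apply_of_mem : ∀ r ∈ R, p r = r
  exists_iterate_mem : ∀ v, ∃ k, p^[k] v ∈ R

lemma not_isParentMap_empty [Nonempty V] {p : V → V} : ¬ IsParentMap ∅ p :=
  fun hp => by simpa using hp.exists_iterate_mem (Classical.arbitrary V)

def parentGraph (p : V → V) : SimpleGraph V := fromRel fun a b => p a = b

lemma parentGraph_adj {p : V → V} {a b : V} :
    (parentGraph p).Adj a b ↔ a ≠ b ∧ (p a = b ∨ p b = a) :=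
  fromRel_adj ..

lemma parentGraph_reachable_apply (p : V → V) (v : V) : (parentGraph p).Reachable v (p v) := by
  by_cases h : v = p v
  · rw [← h]
  · exact (parentGraph_adj.2 ⟨h, .inl rfl⟩).reachable

lemma parentGraph_reachable_iterate (p : V → V) (k : ℕ) (v : V) :
    (parentGraph p).Reachable v (p^[k] v) := by
  induction k generalizing v with
  | zero => rfl
  | succ k ih => exact (parentGraph_reachable_apply p v).trans (ih (p v))

namespace IsParentMap

variable [DecidableEq V] {R : Finset V} {p : V → V}

noncomputable def depth (hp : IsParentMap R p) (v : V) : ℕ := Nat.find (hp.exists_iterate_mem v)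

noncomputable def root (hp : IsParentMap R p) (v : V) : V := p^[hp.depth v] v

lemma root_mem (hp : IsParentMap R p) (v : V) : hp.root v ∈ R :=
  Nat.find_spec (hp.exists_iterate_mem v)

lemma depth_eq_zero_iff (hp : IsParentMap R p) {v : V} : hp.depth v = 0 ↔ v ∈ R := by
  simp [depth]

lemma depth_apply_add_one (hp : IsParentMap R p) {v : V} (hv : v ∉ R) :
    hp.depth (p v) + 1 = hp.depth v := by
  have h0 : hp.depth v ≠ 0 := hp.depth_eq_zero_iff.not.2 hv
  have hle : hp.depth v ≤ hp.depth (p v) + 1 := Nat.find_min' _ (hp.root_mem (p v))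
  have hge : hp.depth (p v) ≤ hp.depth v - 1 := Nat.find_min' _ (by
    have := hp.root_mem v
    rwa [root, ← Nat.sub_one_add_one h0, Function.iterate_succ_apply] at this)
  omega

lemma root_of_mem (hp : IsParentMap R p) {v : V} (hv : v ∈ R) : hp.root v = v := by
  rw [root, hp.depth_eq_zero_iff.2 hv, Function.iterate_zero_apply]

lemma root_apply (hp : IsParentMap R p) (v : V) : hp.root (p v) = hp.root v := by
  by_cases hv : v ∈ R
  · rw [hp.apply_of_mem v hv]
  · rw [root, root, ← hp.depth_apply_add_one hv, Function.iterate_succ_apply]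

lemma reachable_root (hp : IsParentMap R p) (v : V) : (parentGraph p).Reachable v (hp.root v) :=
  parentGraph_reachable_iterate p _ v

lemma root_eq_of_reachable (hp : IsParentMap R p) {a b : V} (h : (parentGraph p).Reachable a b) :
    hp.root a = hp.root b := by
  obtain ⟨w⟩ := h
  induction w with
  | nil => rfl
  | cons hadj _ ih =>
    obtain ⟨-, h | h⟩ := parentGraph_adj.1 hadj <;> subst h
    · exact (hp.root_apply _).symm.trans ih
    · exact (hp.root_apply _).trans ih

lemma existsUnique_root (hp : IsParentMap R p) (c : (parentGraph p).ConnectedComponent) :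
    ∃! r, r ∈ R ∧ (parentGraph p).connectedComponentMk r = c := by
  induction c using ConnectedComponent.ind with
  | h v =>
  refine ⟨hp.root v, ⟨hp.root_mem v, ConnectedComponent.sound (hp.reachable_root v).symm⟩, ?_⟩
  rintro r ⟨hr, hrv⟩
  rw [← hp.root_of_mem hr, hp.root_eq_of_reachable (ConnectedComponent.exact hrv)]

lemma adj_apply (hp : IsParentMap R p) {v : V} (hv : v ∉ R) : (parentGraph p).Adj v (p v) := by
  refine parentGraph_adj.2 ⟨fun h => ?_, .inl rfl⟩
  have := hp.depth_apply_add_one hv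
  rw [← h] at this
  omega

lemma apply_eq_of_adj (hp : IsParentMap R p) {a b : V} (hadj : (parentGraph p).Adj a b)
    (hba : hp.depth b ≤ hp.depth a) : p a = b := by
  obtain ⟨hne, h | h⟩ := parentGraph_adj.1 hadj
  · exact h
  · have hb : b ∉ R := fun hb => hne (h ▸ hp.apply_of_mem b hb)
    have := hp.depth_apply_add_one hb
    rw [h] at this
    omega

/-- At a vertex of maximal depth on a cycle, both neighbours on the cycle would be its parent. -/
theorem isAcyclic_parentGraph (hp : IsParentMap R p) : (parentGraph p).IsAcyclic := by
  intro v c hc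
  obtain ⟨u, hu, hmax⟩ := c.support.toFinset.exists_max_image hp.depth
    ⟨v, List.mem_toFinset.2 c.start_mem_support⟩
  rw [List.mem_toFinset] at hu
  set c' := c.rotate u hu
  have hc' : c'.IsCycle := hc.rotate hu
  have hmax' (w : V) (hw : w ∈ c'.support) : hp.depth w ≤ hp.depth u :=
    hmax w (List.mem_toFinset.2 ((c.mem_support_rotate_iff u hu).1 hw))
  apply hc'.snd_ne_penultimate
  rw [← hp.apply_eq_of_adj (c'.adj_snd hc'.not_nil) (hmax' _ (c'.getVert_mem_support 1)),
    hp.apply_eq_of_adj (c'.adj_penultimate hc'.not_nil).symm (hmax' _ (c'.getVert_mem_support _))]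

lemma exists_isPath_snd_eq (hp : IsParentMap R p) (v : V) :
    ∃ r ∈ R, ∃ w : (parentGraph p).Walk v r, w.IsPath ∧ w.snd = p v := by
  suffices key : ∀ n v, hp.depth v = n → ∃ r ∈ R, ∃ w : (parentGraph p).Walk v r,
      w.IsPath ∧ w.snd = p v ∧ ∀ u ∈ w.support, hp.depth u ≤ n by
    obtain ⟨r, hr, w, hw, hsnd, -⟩ := key _ v rfl
    exact ⟨r, hr, w, hw, hsnd⟩
  intro n
  induction n with
  | zero =>
    intro v hv
    have hvR := hp.depth_eq_zero_iff.1 hv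
    exact ⟨v, hvR, .nil, .nil, (hp.apply_of_mem v hvR).symm, by simp [hv]⟩
  | succ n ih =>
    intro v hv
    have hvR : v ∉ R := fun h => by simp [hp.depth_eq_zero_iff.2 h] at hv
    obtain ⟨r, hr, w, hw, -, hsupp⟩ := ih (p v) (by have := hp.depth_apply_add_one hvR; omega)
    refine ⟨r, hr, .cons (hp.adj_apply hvR) w, ?_, w.snd_cons _, ?_⟩
    · exact hw.cons fun h => by have := hsupp v h; omega
    · simp only [Walk.support_cons, List.mem_cons, forall_eq_or_imp]
      exact ⟨hv.le, fun u hu => (hsupp u hu).trans n.le_succ⟩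

end IsParentMap

def IsRootedForest (R : Finset V) (G : SimpleGraph V) : Prop :=
  G.IsAcyclic ∧ ∀ c : G.ConnectedComponent, ∃! r, r ∈ R ∧ G.connectedComponentMk r = c

lemma IsParentMap.isRootedForest_parentGraph [DecidableEq V] {R : Finset V} {p : V → V}
    (hp : IsParentMap R p) : IsRootedForest R (parentGraph p) :=
  ⟨hp.isAcyclic_parentGraph, hp.existsUnique_root⟩

namespace IsRootedForest

variable {R : Finset V} {G : SimpleGraph V}

noncomputable def root (hG : IsRootedForest R G) (v : V) : V :=
  (hG.2 (G.connectedComponentMk v)).exists.choose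

lemma root_mem (hG : IsRootedForest R G) (v : V) : hG.root v ∈ R :=
  (hG.2 (G.connectedComponentMk v)).exists.choose_spec.1

lemma reachable_root (hG : IsRootedForest R G) (v : V) : G.Reachable v (hG.root v) :=
  (ConnectedComponent.exact (hG.2 (G.connectedComponentMk v)).exists.choose_spec.2).symm

lemma eq_root (hG : IsRootedForest R G) {v r : V} (hr : r ∈ R) (h : G.Reachable v r) :
    r = hG.root v :=
  (hG.2 (G.connectedComponentMk v)).unique ⟨hr, (ConnectedComponent.sound h).symm⟩
    ⟨hG.root_mem v, ConnectedComponent.sound (hG.reachable_root v).symm⟩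

lemma root_eq_of_reachable (hG : IsRootedForest R G) {a b : V} (h : G.Reachable a b) :
    hG.root a = hG.root b :=
  (hG.eq_root (hG.root_mem b) (h.trans (hG.reachable_root b))).symm

noncomputable def pathToRoot (hG : IsRootedForest R G) (v : V) : G.Path v (hG.root v) :=
  ⟨_, (hG.reachable_root v).exists_isPath.choose_spec⟩

noncomputable def parent (hG : IsRootedForest R G) (v : V) : V := (hG.pathToRoot v).1.snd

lemma eq_pathToRoot (hG : IsRootedForest R G) {v : V} {w : G.Walk v (hG.root v)}
    (hw : w.IsPath) : w = hG.pathToRoot v :=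
  congrArg Subtype.val ((hG.1.subsingleton_path _ _).elim ⟨w, hw⟩ _)

lemma snd_eq_parent (hG : IsRootedForest R G) {v r : V} (hr : r ∈ R) {w : G.Walk v r}
    (hw : w.IsPath) : w.snd = hG.parent v := by
  obtain rfl := hG.eq_root hr w.reachable
  rw [hG.eq_pathToRoot hw, parent]

lemma length_eq_length_pathToRoot (hG : IsRootedForest R G) {v r : V} (hr : r ∈ R)
    {w : G.Walk v r} (hw : w.IsPath) : w.length = (hG.pathToRoot v).1.length := by
  obtain rfl := hG.eq_root hr w.reachable
  rw [hG.eq_pathToRoot hw]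

lemma parent_of_mem (hG : IsRootedForest R G) {r : V} (hr : r ∈ R) : hG.parent r = r :=
  (hG.snd_eq_parent hr (Walk.IsPath.nil (u := r))).symm

lemma adj_parent (hG : IsRootedForest R G) {v : V} (hv : v ∉ R) : G.Adj v (hG.parent v) :=
  Walk.adj_snd fun hnil => hv (hnil.eq ▸ hG.root_mem v)

lemma isParentMap_parent (hG : IsRootedForest R G) : IsParentMap R hG.parent := by
  refine ⟨fun r hr => hG.parent_of_mem hr, fun v => ⟨(hG.pathToRoot v).1.length, ?_⟩⟩
  induction h : (hG.pathToRoot v).1.length generalizing v with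
  | zero =>
    rw [Function.iterate_zero_apply, Walk.eq_of_length_eq_zero h]
    exact hG.root_mem v
  | succ n ih =>
    have hv : v ∉ R := fun hv => by
      simp [← hG.length_eq_length_pathToRoot hv (Walk.IsPath.nil (u := v))] at h
    have hnil : ¬ (hG.pathToRoot v).1.Nil := fun hnil => hv (hnil.eq ▸ hG.root_mem v)
    have htail : (hG.pathToRoot v).1.tail.length = (hG.pathToRoot (hG.parent v)).1.length :=
      hG.length_eq_length_pathToRoot (hG.root_mem v) (hG.pathToRoot v).2.tail
    rw [Function.iterate_succ_apply]
    exact ih (hG.parent v) (by have := Walk.length_tail_add_one hnil; omega)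

/-- The parent graph is an acyclic subgraph of `G` with the same components, hence maximal. -/
lemma parentGraph_parent [DecidableEq V] (hG : IsRootedForest R G) :
    parentGraph hG.parent = G := by
  have hp := hG.isParentMap_parent
  have hle : parentGraph hG.parent ≤ G := by
    intro a b hab
    obtain ⟨hne, rfl | rfl⟩ := parentGraph_adj.1 hab
    · exact hG.adj_parent fun ha => hne (hG.parent_of_mem ha).symm
    · exact (hG.adj_parent fun hb => hne (hG.parent_of_mem hb)).symm
  have hroot (v : V) : hp.root v = hG.root v :=
    hG.eq_root (hp.root_mem v) ((hp.reachable_root v).mono hle)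
  have hreach : (parentGraph hG.parent).Reachable = G.Reachable := by
    ext a b
    refine ⟨fun h => h.mono hle, fun h => ?_⟩
    have hab : hp.root a = hp.root b := by rw [hroot, hroot, hG.root_eq_of_reachable h]
    exact (hp.reachable_root a).trans (hab ▸ (hp.reachable_root b).symm)
  have hmax := (maximal_isAcyclic_iff_reachable_eq hle hp.isAcyclic_parentGraph).2 hreach
  exact le_antisymm hle (hmax.2 ⟨le_rfl, hG.1⟩ hle)

end IsRootedForest

lemma IsParentMap.parent_isRootedForest_parentGraph [DecidableEq V] {R : Finset V} {p : V → V}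
    (hp : IsParentMap R p) : hp.isRootedForest_parentGraph.parent = p := by
  funext v
  obtain ⟨r, hr, w, hw, hsnd⟩ := hp.exists_isPath_snd_eq v
  rw [← hp.isRootedForest_parentGraph.snd_eq_parent hr hw, hsnd]

noncomputable def rootedForestEquivParentMap [DecidableEq V] (R : Finset V) :
    {G : SimpleGraph V // IsRootedForest R G} ≃ {p : V → V // IsParentMap R p} where
  toFun G := ⟨G.2.parent, G.2.isParentMap_parent⟩
  invFun p := ⟨parentGraph p, p.2.isRootedForest_parentGraph⟩
  left_inv G := Subtype.ext G.2.parentGraph_parent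
  right_inv p := Subtype.ext p.2.parent_isRootedForest_parentGraph

/-- `n - 1` truncates at `n = 0`, where the only forest is the empty one. -/
def rootedForestCount (m n : ℕ) : ℕ := if n = 0 then 1 else m * (m + n) ^ (n - 1)

lemma choose_mul_rootedForestCount {N j : ℕ} (hj : j ≤ N) :
    (N + 1).choose (j + 1) * rootedForestCount (j + 1) (N - j) =
      N.choose j * (N + 1) ^ (N - j) := by
  rcases hj.eq_or_lt with rfl | hj
  · simp [rootedForestCount]
  · have hcount : rootedForestCount (j + 1) (N - j) = (j + 1) * (N + 1) ^ (N - j - 1) := by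
      rw [rootedForestCount, if_neg (by omega), show j + 1 + (N - j) = N + 1 by omega]
    rw [hcount, ← mul_assoc, ← Nat.add_one_mul_choose_eq, mul_comm (N + 1), mul_assoc,
      ← pow_succ', Nat.sub_add_cancel (by omega)]

lemma rootedForestCount_succ (m N : ℕ) :
    rootedForestCount m (N + 1) =
      ∑ k ∈ range (N + 2), (N + 1).choose k * m ^ k * rootedForestCount k (N + 1 - k) := by
  calc rootedForestCount m (N + 1)
      = ∑ j ∈ range (N + 1), m * (m ^ j * (N + 1) ^ (N - j) * N.choose j) := by
        rw [rootedForestCount, if_neg N.succ_ne_zero, Nat.add_sub_cancel, add_pow, mul_sum]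
        simp only [Nat.cast_id]
    _ = ∑ j ∈ range (N + 1),
          (N + 1).choose (j + 1) * m ^ (j + 1) * rootedForestCount (j + 1) (N + 1 - (j + 1)) := by
        refine sum_congr rfl fun j hj => ?_
        rw [Nat.add_sub_add_right, mul_right_comm ((N + 1).choose (j + 1)),
          choose_mul_rootedForestCount (Nat.lt_succ_iff.1 (mem_range.1 hj))]
        ring
    _ = _ := by simp [sum_range_succ' _ (N + 1), rootedForestCount]

section Counting

variable [DecidableEq V] [Fintype V] {R : Finset V}

def restrictToCompl (R : Finset V) (p : V → V) (v : ↥Rᶜ) : ↥Rᶜ :=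
  if h : p v ∈ R then v else ⟨p v, mem_compl.2 h⟩

def extendFromCompl (A : Finset ↥Rᶜ) (f : ↥A → ↥R) (q : ↥Rᶜ → ↥Rᶜ) (v : V) : V :=
  if hv : v ∈ R then v
  else if ha : ⟨v, mem_compl.2 hv⟩ ∈ A then f ⟨_, ha⟩ else q ⟨v, mem_compl.2 hv⟩

lemma restrictToCompl_of_mem {p : V → V} {v : ↥Rᶜ} (h : p v ∈ R) : restrictToCompl R p v = v :=
  dif_pos h

lemma coe_restrictToCompl_of_notMem {p : V → V} {v : ↥Rᶜ} (h : p v ∉ R) :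
    (restrictToCompl R p v : V) = p v := by
  rw [restrictToCompl, dif_neg h]

section Extend

variable {A : Finset ↥Rᶜ} {f : ↥A → ↥R} {q : ↥Rᶜ → ↥Rᶜ}

lemma extendFromCompl_of_mem {r : V} (hr : r ∈ R) : extendFromCompl A f q r = r :=
  dif_pos hr

lemma extendFromCompl_of_mem_left {v : ↥Rᶜ} (hv : v ∈ A) :
    extendFromCompl A f q v = f ⟨v, hv⟩ := by
  rw [extendFromCompl, dif_neg (mem_compl.1 v.2), dif_pos hv]

lemma extendFromCompl_of_notMem_left {v : ↥Rᶜ} (hv : v ∉ A) :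
    extendFromCompl A f q v = q v := by
  rw [extendFromCompl, dif_neg (mem_compl.1 v.2), dif_neg hv]

lemma mem_iff_extendFromCompl_mem (v : ↥Rᶜ) : v ∈ A ↔ extendFromCompl A f q v ∈ R := by
  by_cases hv : v ∈ A
  · simp [hv, extendFromCompl_of_mem_left hv]
  · simpa [hv, extendFromCompl_of_notMem_left hv] using mem_compl.1 (q v).2

end Extend

lemma exists_iterate_mem_iff_of_restrict {A : Finset ↥Rᶜ} {p : V → V} {q : ↥Rᶜ → ↥Rᶜ}
    (hA : ∀ v, v ∈ A ↔ p v ∈ R) (hpq : ∀ v, v ∉ A → p v = q v) (v : ↥Rᶜ) :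
    (∃ k, p^[k] v ∈ R) ↔ ∃ k, q^[k] v ∈ A := by
  constructor
  · rintro ⟨k, hk⟩
    induction k generalizing v with
    | zero => exact absurd hk (mem_compl.1 v.2)
    | succ k ih =>
      by_cases hv : v ∈ A
      · exact ⟨0, hv⟩
      rw [Function.iterate_succ_apply, hpq v hv] at hk
      obtain ⟨j, hj⟩ := ih (q v) hk
      exact ⟨j + 1, hj⟩
  · rintro ⟨k, hk⟩
    induction k generalizing v with
    | zero => exact ⟨1, (hA v).1 hk⟩
    | succ k ih =>
      by_cases hv : v ∈ A
      · exact ⟨1, (hA v).1 hv⟩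
      obtain ⟨j, hj⟩ := ih (q v) hk
      exact ⟨j + 1, by rwa [Function.iterate_succ_apply, hpq v hv]⟩

def parentMapFiberEquiv (A : Finset ↥Rᶜ) :
    {p : V → V // IsParentMap R p ∧ ∀ v : ↥Rᶜ, v ∈ A ↔ p v ∈ R} ≃
      (↥A → ↥R) × {q : ↥Rᶜ → ↥Rᶜ // IsParentMap A q} where
  toFun p :=
    (fun a => ⟨p.1 a, (p.2.2 a).1 a.2⟩,
      ⟨restrictToCompl R p.1,
        fun a ha => restrictToCompl_of_mem ((p.2.2 a).1 ha),
        fun v => (exists_iterate_mem_iff_of_restrict p.2.2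
          (fun v hv => (coe_restrictToCompl_of_notMem ((p.2.2 v).not.1 hv)).symm) v).1
          (p.2.1.exists_iterate_mem v)⟩)
  invFun fq :=
    ⟨extendFromCompl A fq.1 fq.2.1,
      ⟨fun r hr => extendFromCompl_of_mem hr, fun v => by
        by_cases hv : v ∈ R
        · exact ⟨0, hv⟩
        exact (exists_iterate_mem_iff_of_restrict (v := ⟨v, mem_compl.2 hv⟩)
          mem_iff_extendFromCompl_mem (fun v hv => extendFromCompl_of_notMem_left hv)).2
          (fq.2.2.exists_iterate_mem _)⟩,
      mem_iff_extendFromCompl_mem⟩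
  left_inv p := by
    ext v
    by_cases hv : v ∈ R
    · simp [extendFromCompl_of_mem hv, p.2.1.apply_of_mem v hv]
    set v' : ↥Rᶜ := ⟨v, mem_compl.2 hv⟩
    show extendFromCompl A _ _ v' = p.1 v'
    by_cases hA : v' ∈ A
    · rw [extendFromCompl_of_mem_left hA]
    · rw [extendFromCompl_of_notMem_left hA, coe_restrictToCompl_of_notMem ((p.2.2 v').not.1 hA)]
  right_inv fq := by
    refine Prod.ext (funext fun a => Subtype.ext (extendFromCompl_of_mem_left a.2))
      (Subtype.ext (funext fun v => ?_))
    show restrictToCompl R (extendFromCompl A fq.1 fq.2.1) v = fq.2.1 v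
    by_cases hA : v ∈ A
    · rw [restrictToCompl_of_mem ((mem_iff_extendFromCompl_mem v).1 hA), fq.2.2.apply_of_mem v hA]
    · rw [Subtype.ext_iff, coe_restrictToCompl_of_notMem ((mem_iff_extendFromCompl_mem v).not.1 hA),
        extendFromCompl_of_notMem_left hA]

lemma card_isParentMap_eq_sum (R : Finset V) :
    Nat.card {p : V → V // IsParentMap R p} =
      ∑ A : Finset ↥Rᶜ, #R ^ #A * Nat.card {q : ↥Rᶜ → ↥Rᶜ // IsParentMap A q} := by
  let roots (p : {p : V → V // IsParentMap R p}) : Finset ↥Rᶜ := {v | p.1 v ∈ R}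
  rw [← Nat.card_congr (Equiv.sigmaFiberEquiv roots), Nat.card_sigma]
  refine sum_congr rfl fun A _ => ?_
  have e : {p // roots p = A} ≃ {p : V → V // IsParentMap R p ∧ ∀ v : ↥Rᶜ, v ∈ A ↔ p v ∈ R} :=
    (Equiv.subtypeSubtypeEquivSubtypeInter (IsParentMap R)
      fun p => ({v | p v ∈ R} : Finset ↥Rᶜ) = A).trans
      (Equiv.subtypeEquivRight fun p => by simp [Finset.ext_iff, eq_comm])
  rw [Nat.card_congr (e.trans (parentMapFiberEquiv A)), Nat.card_prod, Nat.card_fun]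
  simp

theorem card_isParentMap (R : Finset V) :
    Nat.card {p : V → V // IsParentMap R p} = rootedForestCount #R #Rᶜ := by
  induction h : #Rᶜ using Nat.strong_induction_on generalizing V with
  | _ n ih =>
  rcases n with _ | N
  · obtain rfl : R = univ := (compl_eq_empty_iff R).1 (card_eq_zero.1 h)
    refine Nat.card_eq_one_iff_unique.2 ⟨⟨fun p q => Subtype.ext (funext fun v => ?_)⟩,
      ⟨⟨id, fun _ _ => rfl, fun v => ⟨0, mem_univ v⟩⟩⟩⟩
    rw [p.2.apply_of_mem v (mem_univ v), q.2.apply_of_mem v (mem_univ v)]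
  have hS : Fintype.card ↥Rᶜ = N + 1 := by rw [Fintype.card_coe, h]
  have hterm (A : Finset ↥Rᶜ) :
      Nat.card {q // IsParentMap A q} = rootedForestCount #A (N + 1 - #A) := by
    rcases A.eq_empty_or_nonempty with rfl | hA
    · have : Nonempty ↥Rᶜ := Fintype.card_pos_iff.1 (by omega)
      simp [not_isParentMap_empty, rootedForestCount]
    · have hAc : #Aᶜ = N + 1 - #A := by rw [card_compl, hS]
      exact ih _ (by have := hA.card_pos; omega) A hAc
  rw [card_isParentMap_eq_sum, sum_congr rfl fun A _ => by rw [hterm A], ← powerset_univ,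
    sum_powerset_apply_card fun k => #R ^ k * rootedForestCount k (N + 1 - k), card_univ, hS,
    rootedForestCount_succ]
  simp only [smul_eq_mul, mul_assoc]

end Counting

/-- The number of rooted labeled forests on a vertex set of size `m + n` with a
distinguished root set `R` of size `m` (each connected component containing
exactly one root) equals `m (m+n)^(n-1)`, for `n ≥ 1`. -/
theorem rooted_forests_count (m n : ℕ) (hn : 1 ≤ n)
    (R : Finset (Fin (m + n))) (hR : R.card = m) :
    Nat.card {G : SimpleGraph (Fin (m + n)) //
        G.IsAcyclic ∧ ∀ c : G.ConnectedComponent,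
          ∃! r : Fin (m + n), r ∈ R ∧ G.connectedComponentMk r = c}
      = m * (m + n) ^ (n - 1) := by
  have hRc : #Rᶜ = n := by rw [card_compl, Fintype.card_fin, hR, Nat.add_sub_cancel_left]
  calc _ = Nat.card {p : Fin (m + n) → Fin (m + n) // IsParentMap R p} :=
        Nat.card_congr (rootedForestEquivParentMap R)
    _ = m * (m + n) ^ (n - 1) := by
        rw [card_isParentMap, hR, hRc, rootedForestCount, if_neg (by omega)]
end

section
/- For natural numbers m ≥ 2 and n ≥ 1, ∑_{k=0}^{n} C(n,k)·(m+k-1)·(m+n-1)^(n-k-1) = m·(m+n)^(n-1), where the k = n term is interpreted as (m+n-1)·(m+n-1)^(-1) = (m+n-1)^0·(m+n-1)/(m+n-1), i.e., working over the rationals. -/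
lemma aux_pow_sum (x : ℚ) (n : ℕ) :
    ∑ k ∈ Finset.range (n + 1), (n.choose k : ℚ) * x ^ k = (1 + x) ^ n := by
  rw [show (1 + x) ^ n = (x + 1) ^ n by ring, add_pow]
  exact Finset.sum_congr rfl fun k _ => by rw [one_pow]; ring

lemma aux_pow_sum' (x : ℚ) (n : ℕ) :
    ∑ k ∈ Finset.range (n + 1), (n.choose k : ℚ) * x ^ (n - k) = (1 + x) ^ n := by
  rw [add_pow]
  exact Finset.sum_congr rfl fun k _ => by rw [one_pow]; ring

lemma aux_deriv_sum (x : ℚ) (n : ℕ) :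
    ∑ k ∈ Finset.range (n + 1), (k : ℚ) * (n.choose k : ℚ) * x ^ k
      = n * x * (1 + x) ^ (n - 1) := by
  cases n with
  | zero => simp
  | succ p =>
    rw [Finset.sum_range_succ']
    have h : ∀ k : ℕ, ((k : ℚ) + 1) * ((p + 1).choose (k + 1) : ℚ)
        = ((p : ℚ) + 1) * (p.choose k : ℚ) := by
      intro k
      have := Nat.add_one_mul_choose_eq p k
      have : ((p + 1) * p.choose k : ℚ) = ((p + 1).choose (k + 1) * (k + 1) : ℚ) := by
        exact_mod_cast congrArg (Nat.cast (R := ℚ)) this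
      push_cast at this ⊢
      linarith [this]
    have : ∑ k ∈ Finset.range (p + 1),
          ((k + 1 : ℕ) : ℚ) * ((p + 1).choose (k + 1) : ℚ) * x ^ (k + 1)
        = ((p : ℚ) + 1) * x * ((1 + x) ^ p) := by
      rw [← aux_pow_sum x p, Finset.mul_sum]
      refine Finset.sum_congr rfl fun k _ => ?_
      push_cast
      rw [show ((k : ℚ) + 1) * ((p + 1).choose (k + 1) : ℚ) * x ^ (k + 1)
          = (((k : ℚ) + 1) * ((p + 1).choose (k + 1) : ℚ)) * x ^ (k + 1) by ring, h k]
      ring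
    rw [this]
    push_cast
    simp [Nat.add_sub_cancel]

/-- Key inductive step identity (M₁ + M₂), over ℚ with an integer exponent
(negative at `k = n`): for `m ≥ 2`, `n ≥ 1`,
`∑_{k=0}^n C(n,k) (m+k-1) (m+n-1)^(n-k-1) = m (m+n)^(n-1)`. -/
theorem sum_M1_add_M2 (m n : ℕ) (hm : 2 ≤ m) (hn : 1 ≤ n) :
    ∑ k ∈ Finset.range (n + 1),
        (n.choose k : ℚ) * ((m : ℚ) + k - 1) * ((m : ℚ) + n - 1) ^ ((n : ℤ) - k - 1)
      = (m : ℚ) * ((m : ℚ) + n) ^ (n - 1) := by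
  set x : ℚ := (m : ℚ) + n - 1 with hxdef
  have hx : x ≠ 0 := by
    have : (2 : ℚ) ≤ (m : ℚ) := by exact_mod_cast hm
    have : (0 : ℚ) ≤ (n : ℚ) := by positivity
    rw [hxdef]; nlinarith
  -- rewrite each zpow as x^(n-k) * x⁻¹
  have step1 : ∀ k ∈ Finset.range (n + 1),
      (n.choose k : ℚ) * ((m : ℚ) + k - 1) * x ^ ((n : ℤ) - k - 1)
        = (n.choose k : ℚ) * ((m : ℚ) + k - 1) * x ^ (n - k) * x⁻¹ := by
    intro k hk
    have hkn : k ≤ n := Nat.lt_succ_iff.mp (Finset.mem_range.mp hk)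
    have he : (n : ℤ) - k - 1 = ((n - k : ℕ) : ℤ) - 1 := by
      rw [Nat.cast_sub hkn]
    rw [he, zpow_sub₀ hx, zpow_natCast, zpow_one]
    rw [div_eq_mul_inv]; ring
  rw [Finset.sum_congr rfl step1]
  -- factor out x⁻¹
  have hsum : ∑ k ∈ Finset.range (n + 1),
      (n.choose k : ℚ) * ((m : ℚ) + k - 1) * x ^ (n - k) * x⁻¹
      = (∑ k ∈ Finset.range (n + 1),
          (n.choose k : ℚ) * ((m : ℚ) + k - 1) * x ^ (n - k)) * x⁻¹ := by
    rw [Finset.sum_mul]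
  rw [hsum]
  -- compute the inner sum
  have hinner : ∑ k ∈ Finset.range (n + 1),
      (n.choose k : ℚ) * ((m : ℚ) + k - 1) * x ^ (n - k)
      = (m : ℚ) * ((m : ℚ) + n) ^ (n - 1) * x := by
    have hsplit : ∀ k ∈ Finset.range (n + 1),
        (n.choose k : ℚ) * ((m : ℚ) + k - 1) * x ^ (n - k)
          = x * ((n.choose k : ℚ) * x ^ (n - k))
            - ((n - k : ℕ) : ℚ) * (n.choose k : ℚ) * x ^ (n - k) := by
      intro k hk
      have hkn : k ≤ n := Nat.lt_succ_iff.mp (Finset.mem_range.mp hk)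
      have : ((n - k : ℕ) : ℚ) = (n : ℚ) - k := by
        rw [Nat.cast_sub hkn]
      rw [this, hxdef]; ring
    rw [Finset.sum_congr rfl hsplit, Finset.sum_sub_distrib, ← Finset.mul_sum,
      aux_pow_sum' x n]
    -- second sum: reflect
    have hrefl : ∑ k ∈ Finset.range (n + 1),
        ((n - k : ℕ) : ℚ) * (n.choose k : ℚ) * x ^ (n - k)
        = ∑ k ∈ Finset.range (n + 1), (k : ℚ) * (n.choose k : ℚ) * x ^ k := by
      rw [← Finset.sum_range_reflect (fun k => (k : ℚ) * (n.choose k : ℚ) * x ^ k) (n + 1)]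
      refine Finset.sum_congr rfl fun k hk => ?_
      have hkn : k ≤ n := Nat.lt_succ_iff.mp (Finset.mem_range.mp hk)
      have h1 : n + 1 - 1 - k = n - k := by omega
      rw [h1, Nat.choose_symm hkn]
    rw [hrefl, aux_deriv_sum]
    obtain ⟨q, rfl⟩ := Nat.exists_eq_add_of_le hn
    have hq : 1 + q - 1 = q := by omega
    rw [hq, hxdef]
    push_cast
    ring
  rw [hinner, mul_inv_cancel_right₀ hx]
end

section
/- Define Q: (pairs of disjoint finite sets) → ℕ by the recursion Q(η,γ) = ∑_{ξ ⊆ γ} Q((η∖{x}) ∪ ξ, γ∖ξ) for a chosen x ∈ η when η ≠ ∅, with Q(∅,∅) = 1 and Q(∅,γ) = 0 for γ ≠ ∅. Then Q(η,γ) depends only on |η| and |γ|, and Q(η,γ) = |η|·(|η|+|γ|)^(|γ|−1) when |η| ≥ 1 (and Q(η,0-many) = 1). -/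
open Finset

private lemma kr_sum_part (s n : ℕ) :
    (∑ k ∈ range n, n.choose k * s ^ (n - k)) + 1 = (s + 1) ^ n := by
  have h := add_pow 1 s n
  rw [Finset.sum_range_succ] at h
  simp only [one_pow, one_mul, Nat.sub_self, pow_zero, Nat.choose_self, mul_one] at h
  rw [add_comm 1 s] at h
  rw [h]
  congr 1
  exact Finset.sum_congr rfl fun k _ => (mul_comm _ _)

private lemma kr_sum_part2 (s q : ℕ) :
    (∑ k ∈ range (q + 1), k * ((q + 1).choose k * s ^ (q + 1 - k))) + (q + 1)
      = (q + 1) * (s + 1) ^ q := by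
  rw [Finset.sum_range_succ']
  simp only [zero_mul, add_zero]
  have hstep : ∀ j ∈ range q, (j + 1) * ((q + 1).choose (j + 1) * s ^ (q + 1 - (j + 1)))
      = (q + 1) * (q.choose j * s ^ (q - j)) := by
    intro j hj
    have h := Nat.add_one_mul_choose_eq q j
    have he : q + 1 - (j + 1) = q - j := by omega
    rw [he, ← mul_assoc, ← mul_assoc, mul_comm (j+1) ((q+1).choose (j+1)), ← h]
  rw [Finset.sum_congr rfl hstep, ← Finset.mul_sum, ← Nat.mul_succ]
  congr 1
  exact kr_sum_part s q

private lemma kr_ident (p q : ℕ) :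
    (p + 1) * (p + q + 2) ^ q
      = (∑ k ∈ range (q + 1), (q + 1).choose k * ((p + k) * (p + q + 1) ^ (q - k))) + 1 := by
  set s := p + q + 1 with hs
  apply Nat.eq_of_mul_eq_mul_left (show 0 < s by omega)
  have hterm : ∀ k ∈ range (q + 1),
      s * ((q + 1).choose k * ((p + k) * s ^ (q - k)))
        = p * ((q + 1).choose k * s ^ (q + 1 - k)) + k * ((q + 1).choose k * s ^ (q + 1 - k)) := by
    intro k hk
    rw [mem_range] at hk
    have he : q + 1 - k = (q - k) + 1 := by omega
    rw [he, pow_succ]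
    ring
  rw [Nat.mul_add, Finset.mul_sum, Finset.sum_congr rfl hterm, Finset.sum_add_distrib,
    ← Finset.mul_sum]
  have h1 := kr_sum_part s (q + 1)
  have h2 := kr_sum_part2 s q
  set S1 := ∑ k ∈ range (q + 1), (q + 1).choose k * s ^ (q + 1 - k) with hS1
  set S2 := ∑ k ∈ range (q + 1), k * ((q + 1).choose k * s ^ (q + 1 - k)) with hS2
  rw [mul_one]
  apply Nat.add_right_cancel (m := p + (q + 1))
  have e1 : p * S1 + p = p * (s + 1) ^ (q + 1) := by rw [← h1]; ring
  calc s * ((p + 1) * (p + q + 2) ^ q) + (p + (q + 1))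
      = (p + q + 1) * ((p + 1) * (p + q + 2) ^ q) + (p + (q + 1)) := by rw [hs]
    _ = p * ((p + q + 2) * (p + q + 2) ^ q) + (q + 1) * (p + q + 2) ^ q + (p + q + 1) := by ring
    _ = p * (s + 1) ^ (q + 1) + (q + 1) * (s + 1) ^ q + s := by
        rw [hs, pow_succ]; ring
    _ = (p * S1 + p) + (S2 + (q + 1)) + s := by rw [e1, h2]
    _ = (p * S1 + S2 + s) + (p + (q + 1)) := by ring

/-- Kernel recursion with `h = ν = 1`, formalized on `ℕ × ℕ`: any `N` with
`N 0 0 = 1`, `N 0 n = 0` for `n ≥ 1`, and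
`N m n = ∑_{k=0}^n C(n,k) N(m-1+k, n-k)` for `m ≥ 1`, satisfies
`N m 0 = 1` and `N m n = m (m+n)^(n-1)` for `m ≥ 1`, `n ≥ 1`. -/
theorem kernel_recursion_solution (N : ℕ → ℕ → ℕ)
    (h00 : N 0 0 = 1) (h0 : ∀ n, 1 ≤ n → N 0 n = 0)
    (hrec : ∀ m n, 1 ≤ m →
      N m n = ∑ k ∈ Finset.range (n + 1), n.choose k * N (m - 1 + k) (n - k)) :
    ∀ m, 1 ≤ m → N m 0 = 1 ∧ ∀ n, 1 ≤ n → N m n = m * (m + n) ^ (n - 1) := by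
  have hA : ∀ m, N m 0 = 1 := by
    intro m
    induction m with
    | zero => exact h00
    | succ p ih =>
      rw [hrec (p + 1) 0 (by omega)]
      simpa using ih
  have hB : ∀ n, 1 ≤ n → ∀ m, N m n = m * (m + n) ^ (n - 1) := by
    intro n
    induction n using Nat.strong_induction_on with
    | _ n IH =>
      intro hn m
      induction m with
      | zero => rw [h0 n hn]; simp
      | succ p ihm =>
        obtain ⟨q, rfl⟩ : ∃ q, n = q + 1 := ⟨n - 1, by omega⟩
        rw [hrec (p + 1) (q + 1) (by omega), Finset.sum_range_succ]
        have hlast : (q + 1).choose (q + 1) * N (p + 1 - 1 + (q + 1)) (q + 1 - (q + 1)) = 1 := by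
          simp [hA]
        rw [hlast]
        have hterm : ∀ k ∈ range (q + 1), (q + 1).choose k * N (p + 1 - 1 + k) (q + 1 - k)
            = (q + 1).choose k * ((p + k) * (p + q + 1) ^ (q - k)) := by
          intro k hk
          rw [mem_range] at hk
          by_cases hk0 : k = 0
          · subst hk0
            have : N (p + 1 - 1 + 0) (q + 1 - 0) = p * (p + (q + 1)) ^ (q + 1 - 1) := by
              simpa using ihm
            rw [this]
            norm_num
            left
            congr 1
          · have hlt : q + 1 - k < q + 1 := by omega
            have h1 : 1 ≤ q + 1 - k := by omega
            rw [IH (q + 1 - k) hlt h1 (p + 1 - 1 + k)]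
            have e1 : p + 1 - 1 + k = p + k := by omega
            have e2 : p + k + (q + 1 - k) = p + q + 1 := by omega
            have e3 : q + 1 - k - 1 = q - k := by omega
            rw [e1, e2, e3]
        rw [Finset.sum_congr rfl hterm]
        have h := kr_ident p q
        rw [show p + 1 + (q + 1) = p + q + 2 by omega, show q + 1 - 1 = q from rfl, ← h]
  intro m hm
  exact ⟨hA m, fun n hn => hB n hn m⟩
end

section
/- The number of rooted labeled trees on n+1 vertices (trees on a fixed vertex set of size n+1 with one distinguished root) equals (n+1)^n. -/
/-!
A rooted forest on a finite set of `N` vertices is encoded by its parent map: every orbit ends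
in a fixed point, and the fixed points are the roots. A rooted tree is a forest with one root,
and it corresponds to a tree with a marked vertex `r` by sending each vertex to its neighbour
closer to `r`.

Let `F k` be the number of rooted forests with `k` roots. Pair a forest with `k + 1` roots, one of
its roots `r` and a vertex `v` outside the tree of `r` with the forest with `k` roots obtained by
making `r` a child of `v`, together with the non-root `r`. This is a bijection, and counting both
sides gives `F (k + 1) * (N * k) = F k * (N - k)` (Pitman's double counting). From `F N = 1`
follows `F (k + 1) = (N - 1).choose k * N ^ (N - 1 - k)`, and `k = 0` counts rooted trees.
-/

open Function Finset

namespace Function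

variable {α : Type*} {f : α → α}

def IsRootedForest (f : α → α) : Prop := ∀ x, ∃ n, IsFixedPt f (f^[n] x)

theorem IsFixedPt.eq_of_iterate_eq {x y z : α} {m n : ℕ} (hy : IsFixedPt f y)
    (hxy : f^[m] x = y) (hxz : f^[n] x = z) (hz : IsFixedPt f z) : y = z := by
  wlog hmn : m ≤ n generalizing y z m n
  · exact (this hz hxz hxy hy (le_of_not_ge hmn)).symm
  obtain ⟨k, rfl⟩ := Nat.exists_eq_add_of_le' hmn
  rw [← hxz, iterate_add_apply, hxy, (hy.iterate k).eq]

theorem IsRootedForest.isFixedPt_of_isPeriodicPt (hf : IsRootedForest f) {x : α} {m : ℕ}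
    (hx : IsPeriodicPt f m x) (hm : 0 < m) : IsFixedPt f x := by
  obtain ⟨n, hn⟩ := hf x
  have hreturn : f^[n] x = x :=
    calc f^[n] x = f^[m * n - n] (f^[n] x) := ((hn.iterate _).eq).symm
      _ = f^[m * n] x := by
        rw [← iterate_add_apply, Nat.sub_add_cancel (Nat.le_mul_of_pos_left n hm)]
      _ = x := (hx.mul_const n).eq
  exact hreturn ▸ hn

theorem iterate_update_of_forall_lt_ne [DecidableEq α] {a b x : α} {n : ℕ}
    (h : ∀ i < n, f^[i] x ≠ a) : (update f a b)^[n] x = f^[n] x := by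
  induction n with
  | zero => rfl
  | succ n ih =>
    rw [iterate_succ_apply', iterate_succ_apply', ih fun i hi => h i (by omega),
      update_of_ne (h n n.lt_succ_self)]

theorem iterate_update_of_forall_ne [DecidableEq α] {a b x : α} (h : ∀ i, f^[i] x ≠ a)
    (n : ℕ) : (update f a b)^[n] x = f^[n] x :=
  iterate_update_of_forall_lt_ne fun i _ => h i

theorem IsRootedForest.exists_isFixedPt_update_of_forall_ne [DecidableEq α]
    (hf : IsRootedForest f) {a b x : α} (hx : ∀ n, f^[n] x ≠ a) :
    ∃ n, IsFixedPt (update f a b) ((update f a b)^[n] x) := by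
  obtain ⟨n, hn⟩ := hf x
  refine ⟨n, ?_⟩
  rw [iterate_update_of_forall_ne hx, IsFixedPt, update_of_ne (hx n)]
  exact hn

theorem IsRootedForest.update_self [DecidableEq α] (hf : IsRootedForest f) (u : α) :
    IsRootedForest (update f u u) := by
  intro x
  by_cases hx : ∃ n, f^[n] x = u
  · classical
    refine ⟨Nat.find hx, ?_⟩
    rw [iterate_update_of_forall_lt_ne fun i hi => Nat.find_min hx hi, Nat.find_spec hx]
    exact Function.update_self u u f
  · push Not at hx
    exact hf.exists_isFixedPt_update_of_forall_ne hx

theorem IsRootedForest.update_of_forall_iterate_ne [DecidableEq α] (hf : IsRootedForest f)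
    {r v : α} (hv : ∀ n, f^[n] v ≠ r) : IsRootedForest (update f r v) := by
  intro x
  by_cases hx : ∃ n, f^[n] x = r
  · classical
    obtain ⟨m, hm⟩ := hf.exists_isFixedPt_update_of_forall_ne (b := v) hv
    refine ⟨m + (Nat.find hx + 1), ?_⟩
    rwa [iterate_add_apply, iterate_succ_apply',
      iterate_update_of_forall_lt_ne fun i hi => Nat.find_min hx hi, Nat.find_spec hx,
      Function.update_self]
  · push Not at hx
    exact hf.exists_isFixedPt_update_of_forall_ne hx

theorem IsRootedForest.iterate_apply_ne (hf : IsRootedForest f) {u : α} (hu : ¬IsFixedPt f u)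
    (n : ℕ) : f^[n] (f u) ≠ u := fun h =>
  hu (hf.isFixedPt_of_isPeriodicPt (by rwa [IsPeriodicPt, IsFixedPt, iterate_succ_apply])
    n.succ_pos)

def IsRootedTree (f : α → α) (r : α) : Prop := IsFixedPt f r ∧ ∀ x, ∃ n, f^[n] x = r

namespace IsRootedTree

variable {r : α}

theorem isRootedForest (hf : IsRootedTree f r) : IsRootedForest f := fun x =>
  let ⟨n, hn⟩ := hf.2 x
  ⟨n, hn ▸ hf.1⟩

theorem isFixedPt_iff (hf : IsRootedTree f r) {x : α} : IsFixedPt f x ↔ x = r := by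
  refine ⟨fun hx => ?_, fun hx => hx ▸ hf.1⟩
  obtain ⟨n, hn⟩ := hf.2 x
  exact hx.eq_of_iterate_eq (m := 0) rfl hn hf.1

end IsRootedTree

section Counting

open scoped Classical

variable (α : Type*) [Fintype α]

noncomputable def rootedForests (k : ℕ) : Finset (α → α) :=
  {f | IsRootedForest f ∧ #{x | IsFixedPt f x} = k}

variable {α}

theorem mem_rootedForests {f : α → α} {k : ℕ} :
    f ∈ rootedForests α k ↔ IsRootedForest f ∧ #{x | IsFixedPt f x} = k := by
  simp [rootedForests]

theorem filter_isFixedPt_update_of_ne {f : α → α} {a b : α} (hab : b ≠ a) :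
    ({x | IsFixedPt (update f a b) x} : Finset α) = ({x | IsFixedPt f x} : Finset α).erase a := by
  ext x
  simp only [mem_filter, mem_erase, mem_univ, true_and]
  by_cases hx : x = a
  · subst hx; simp [IsFixedPt, hab]
  · simp [IsFixedPt, hx]

theorem filter_isFixedPt_update_self (f : α → α) (a : α) :
    ({x | IsFixedPt (update f a a) x} : Finset α) =
      insert a ({x | IsFixedPt f x} : Finset α) := by
  ext x
  simp only [mem_filter, mem_insert, mem_univ, true_and]
  by_cases hx : x = a
  · subst hx; simp [IsFixedPt]
  · simp [IsFixedPt, hx]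

theorem IsRootedForest.sum_card_reaching {f : α → α} (hf : IsRootedForest f) :
    ∑ r ∈ {x | IsFixedPt f x}, #{x | ∃ n, f^[n] x = r} = Fintype.card α := by
  refine (sum_card_bipartiteAbove_eq_sum_card_bipartiteBelow
    (fun x r => ∃ n, f^[n] x = r)).symm.trans ?_
  rw [← card_univ, card_eq_sum_ones]
  refine sum_congr rfl fun x _ => card_eq_one.mpr ?_
  obtain ⟨n, hn⟩ := hf x
  refine ⟨f^[n] x, ext fun r => ?_⟩
  simp only [mem_bipartiteAbove, mem_filter, mem_univ, true_and, mem_singleton]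
  exact ⟨fun ⟨hr, m, hm⟩ => hr.eq_of_iterate_eq hm rfl hn,
    fun h => ⟨h ▸ hn, n, h.symm⟩⟩

theorem IsRootedForest.sum_card_not_reaching {f : α → α} {k : ℕ} (hf : IsRootedForest f)
    (hk : #{x | IsFixedPt f x} = k + 1) :
    ∑ r ∈ {x | IsFixedPt f x}, #{x | ¬∃ n, f^[n] x = r} = Fintype.card α * k := by
  have htotal : ∑ r ∈ {x | IsFixedPt f x},
      (#{x | ∃ n, f^[n] x = r} + #{x | ¬∃ n, f^[n] x = r}) = (k + 1) * Fintype.card α := by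
    rw [sum_congr rfl fun r _ => card_filter_add_card_filter_not _, sum_const, hk, card_univ,
      smul_eq_mul]
  rw [sum_add_distrib, hf.sum_card_reaching] at htotal
  linarith

-- `(f, r, v) ↦ (update f r v, r)` hangs the tree of the root `r` below `v`;
-- `(g, u) ↦ (update g u u, u, g u)` cuts `u` off its parent.
theorem card_sigma_rootedForests_succ_eq (k : ℕ) :
    #((rootedForests α (k + 1)).sigma fun f =>
      ({r | IsFixedPt f r} : Finset α).sigma fun r => ({v | ¬∃ n, f^[n] v = r} : Finset α)) =
    #((rootedForests α k).sigma fun g => ({u | ¬IsFixedPt g u} : Finset α)) := by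
  refine card_nbij' (fun p => ⟨update p.1 p.2.1 p.2.2, p.2.1⟩)
    (fun q => ⟨update q.1 q.2 q.2, q.2, q.1 q.2⟩) ?_ ?_ ?_ ?_
  · rintro ⟨f, r, v⟩ hp
    simp only [mem_coe, mem_sigma, mem_rootedForests, mem_filter, mem_univ, true_and,
      not_exists] at hp ⊢
    obtain ⟨⟨hf, hk⟩, hr, hv⟩ := hp
    have hvr : v ≠ r := hv 0
    refine ⟨⟨hf.update_of_forall_iterate_ne hv, ?_⟩, by simpa [IsFixedPt] using hvr⟩
    rw [filter_isFixedPt_update_of_ne hvr, card_erase_of_mem (by simpa using hr), hk]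
    rfl
  · rintro ⟨g, u⟩ hq
    simp only [mem_coe, mem_sigma, mem_rootedForests, mem_filter, mem_univ, true_and,
      not_exists] at hq ⊢
    obtain ⟨⟨hg, hk⟩, hu⟩ := hq
    refine ⟨⟨hg.update_self u, ?_⟩, by simp [IsFixedPt], fun n => ?_⟩
    · rw [filter_isFixedPt_update_self, card_insert_of_notMem (by simpa using hu), hk]
    · rw [iterate_update_of_forall_ne (hg.iterate_apply_ne hu)]
      exact hg.iterate_apply_ne hu n
  · rintro ⟨f, r, v⟩ hp
    simp only [mem_coe, mem_sigma, mem_filter, mem_univ, true_and] at hp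
    have hfr : f r = r := hp.2.1
    simp [hfr]
  · rintro ⟨g, u⟩ -
    simp

theorem card_rootedForests_succ_mul (k : ℕ) :
    #(rootedForests α (k + 1)) * (Fintype.card α * k) =
      #(rootedForests α k) * (Fintype.card α - k) := by
  have hroots : ∀ f ∈ rootedForests α (k + 1), #(({r | IsFixedPt f r} : Finset α).sigma
      fun r => ({v | ¬∃ n, f^[n] v = r} : Finset α)) = Fintype.card α * k := fun f hf => by
    obtain ⟨hf, hk⟩ := mem_rootedForests.mp hf
    rw [card_sigma, hf.sum_card_not_reaching hk]
  have hnonroots : ∀ g ∈ rootedForests α k,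
      #({u | ¬IsFixedPt g u} : Finset α) = Fintype.card α - k := fun g hg => by
    have := card_filter_add_card_filter_not (s := univ) (fun u => IsFixedPt g u)
    rw [(mem_rootedForests.mp hg).2, card_univ] at this
    omega
  have hcount := card_sigma_rootedForests_succ_eq (α := α) k
  rwa [card_sigma, card_sigma, sum_const_nat hroots, sum_const_nat hnonroots] at hcount

theorem rootedForests_card_eq_singleton_id : rootedForests α (Fintype.card α) = {id} := by
  ext f
  rw [mem_rootedForests, mem_singleton]
  constructor
  · rintro ⟨-, hf⟩
    funext x
    have hx : x ∈ ({x | IsFixedPt f x} : Finset α) := by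
      rw [eq_univ_of_card _ hf]; exact mem_univ x
    exact (mem_filter.mp hx).2
  · rintro rfl
    exact ⟨fun x => ⟨0, rfl⟩, by simp [IsFixedPt]⟩

theorem card_rootedForests_succ {n k : ℕ} (hα : Fintype.card α = n + 1) (hk : k ≤ n) :
    #(rootedForests α (k + 1)) = n.choose k * (n + 1) ^ (n - k) := by
  induction hk using Nat.decreasingInduction with
  | self => simp [← hα, rootedForests_card_eq_singleton_id]
  | of_succ k hk ih =>
    have hrec := card_rootedForests_succ_mul (α := α) (k + 1)
    rw [ih, hα, show n + 1 - (k + 1) = n - k by omega] at hrec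
    apply Nat.eq_of_mul_eq_mul_right (show 0 < n - k by omega)
    calc #(rootedForests α (k + 1)) * (n - k)
        = n.choose (k + 1) * (k + 1) * ((n + 1) ^ (n - (k + 1)) * (n + 1)) := by
          rw [← hrec]; ring
      _ = n.choose k * (n + 1) ^ (n - k) * (n - k) := by
          rw [Nat.choose_succ_right_eq, ← pow_succ, show n - (k + 1) + 1 = n - k by omega]; ring

theorem mem_rootedForests_one_iff {f : α → α} :
    f ∈ rootedForests α 1 ↔ ∃ r, IsRootedTree f r := by
  rw [mem_rootedForests, card_eq_one]
  constructor
  · rintro ⟨hf, r, hr⟩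
    have hfix : ∀ x, IsFixedPt f x ↔ x = r := fun x => by
      simpa using congrArg (x ∈ ·) hr
    refine ⟨r, (hfix r).mpr rfl, fun x => ?_⟩
    obtain ⟨n, hn⟩ := hf x
    exact ⟨n, (hfix _).mp hn⟩
  · rintro ⟨r, hr⟩
    exact ⟨hr.isRootedForest, r, by ext x; simp [hr.isFixedPt_iff]⟩

end Counting

end Function

namespace SimpleGraph

variable {V : Type*} {G : SimpleGraph V}

def ofParentMap (f : V → V) : SimpleGraph V := fromRel fun x y => f x = y

theorem ofParentMap_adj {f : V → V} {x y : V} :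
    (ofParentMap f).Adj x y ↔ x ≠ y ∧ (f x = y ∨ f y = x) :=
  fromRel_adj _ _ _

theorem edgeSet_ofParentMap (f : V → V) :
    (ofParentMap f).edgeSet = (fun x => s(x, f x)) '' {x | f x ≠ x} := by
  ext e
  induction e using Sym2.ind with
  | h x y =>
    simp only [mem_edgeSet, ofParentMap_adj, Set.mem_image, Set.mem_ofPred_eq, Sym2.eq_iff]
    constructor
    · rintro ⟨hxy, rfl | rfl⟩
      · exact ⟨x, hxy.symm, Or.inl ⟨rfl, rfl⟩⟩
      · exact ⟨y, hxy, Or.inr ⟨rfl, rfl⟩⟩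
    · rintro ⟨z, hz, ⟨rfl, rfl⟩ | ⟨rfl, rfl⟩⟩
      · exact ⟨Ne.symm hz, Or.inl rfl⟩
      · exact ⟨hz, Or.inr rfl⟩

theorem Reachable.exists_adj_dist_lt {v r : V} (h : G.Reachable v r) (hv : v ≠ r) :
    ∃ w, G.Adj v w ∧ G.dist w r < G.dist v r := by
  obtain ⟨p, hp⟩ := h.exists_walk_length_eq_dist
  have hnil : ¬p.Nil := Walk.not_nil_of_ne hv
  refine ⟨p.snd, p.adj_snd hnil, ?_⟩
  calc G.dist p.snd r ≤ p.tail.length := dist_le _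
    _ < p.length := by rw [← Walk.length_tail_add_one hnil]; omega
    _ = G.dist v r := hp

open Classical in
noncomputable def parent (G : SimpleGraph V) (r v : V) : V :=
  if h : ∃ w, G.Adj v w ∧ G.dist w r < G.dist v r then h.choose else v

theorem parent_self (r : V) : G.parent r r = r := by
  simp [parent]

theorem adj_parent_of_ne {r v : V} (h : G.parent r v ≠ v) : G.Adj v (G.parent r v) := by
  unfold parent at h ⊢
  split_ifs at h ⊢ with hex
  · exact hex.choose_spec.1
  · exact absurd rfl h

theorem Reachable.adj_parent_and_dist_lt {r v : V} (h : G.Reachable v r) (hv : v ≠ r) :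
    G.Adj v (G.parent r v) ∧ G.dist (G.parent r v) r < G.dist v r := by
  have hex := h.exists_adj_dist_lt hv
  simp only [parent, dif_pos hex]
  exact hex.choose_spec

theorem ofParentMap_parent_le (r : V) : ofParentMap (G.parent r) ≤ G := by
  intro x y hxy
  obtain ⟨hne, rfl | rfl⟩ := ofParentMap_adj.mp hxy
  · exact adj_parent_of_ne (Ne.symm hne)
  · exact (adj_parent_of_ne hne).symm

theorem Connected.isRootedTree_parent (hG : G.Connected) (r : V) :
    IsRootedTree (G.parent r) r := by
  refine ⟨parent_self r, fun x => ?_⟩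
  induction hd : G.dist x r using Nat.strong_induction_on generalizing x with
  | _ d ih =>
    by_cases hx : x = r
    · exact ⟨0, hx⟩
    · have hlt := ((hG x r).adj_parent_and_dist_lt hx).2
      obtain ⟨n, hn⟩ := ih _ (hd ▸ hlt) (G.parent r x) rfl
      exact ⟨n + 1, by rwa [iterate_succ_apply]⟩

end SimpleGraph

namespace Function.IsRootedTree

open SimpleGraph

variable {V : Type*} {f : V → V} {r : V}

theorem reachable_ofParentMap (hf : IsRootedTree f r) (x : V) :
    (ofParentMap f).Reachable x r := by
  obtain ⟨n, hn⟩ := hf.2 x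
  induction n generalizing x with
  | zero => exact hn ▸ Reachable.refl x
  | succ n ih =>
    refine Reachable.trans ?_ (ih (f x) (by rwa [← iterate_succ_apply]))
    by_cases hx : x = f x
    · exact hx ▸ Reachable.refl x
    · exact (ofParentMap_adj.mpr ⟨hx, Or.inl rfl⟩).reachable

theorem connected_ofParentMap (hf : IsRootedTree f r) : (ofParentMap f).Connected :=
  haveI : Nonempty V := ⟨r⟩
  ⟨fun x y => (hf.reachable_ofParentMap x).trans (hf.reachable_ofParentMap y).symm⟩

-- A neighbour of `v` closer to `r` cannot be a child of `v` once `f` is known to descend there.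
theorem apply_eq_of_adj_of_dist_lt (hf : IsRootedTree f r) {v w : V}
    (hvw : (ofParentMap f).Adj v w) (hw : (ofParentMap f).dist w r < (ofParentMap f).dist v r)
    (hdesc : w ≠ r → (ofParentMap f).dist (f w) r < (ofParentMap f).dist w r) : f v = w := by
  obtain ⟨-, hfv | hfw⟩ := ofParentMap_adj.mp hvw
  · exact hfv
  · by_cases hwr : w = r
    · subst hwr
      simp [← hfw, hf.1.eq] at hw
    · have := hdesc hwr
      rw [hfw] at this
      omega

theorem dist_apply_lt (hf : IsRootedTree f r) {v : V} (hv : v ≠ r) :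
    (ofParentMap f).dist (f v) r < (ofParentMap f).dist v r := by
  induction hd : (ofParentMap f).dist v r using Nat.strong_induction_on generalizing v with
  | _ d ih =>
    obtain ⟨w, hvw, hw⟩ := (hf.reachable_ofParentMap v).exists_adj_dist_lt hv
    rw [hf.apply_eq_of_adj_of_dist_lt hvw hw fun hwr => ih _ (hd ▸ hw) hwr rfl, ← hd]
    exact hw

theorem parent_ofParentMap (hf : IsRootedTree f r) : (ofParentMap f).parent r = f := by
  funext v
  by_cases hv : v = r
  · rw [hv, parent_self, hf.1.eq]
  · obtain ⟨hadj, hlt⟩ := (hf.reachable_ofParentMap v).adj_parent_and_dist_lt hv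
    exact (hf.apply_eq_of_adj_of_dist_lt hadj hlt hf.dist_apply_lt).symm

theorem isTree_ofParentMap [Finite V] (hf : IsRootedTree f r) : (ofParentMap f).IsTree := by
  have hinj : Set.InjOn (fun x => s(x, f x)) {x | f x ≠ x} := by
    rintro x hx y - hxy
    rcases Sym2.eq_iff.mp hxy with ⟨h, -⟩ | ⟨rfl, hyx⟩
    · exact h
    · have h2 : IsPeriodicPt f 2 (f y) := by
        show f (f (f y)) = f y
        rw [hyx]
      exact absurd (hf.isRootedForest.isFixedPt_of_isPeriodicPt h2 two_pos) hx
  have hnonfixed : {x | f x ≠ x} = ({r}ᶜ : Set V) := by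
    ext x
    simp [← hf.isFixedPt_iff, IsFixedPt]
  refine isTree_iff_connected_and_card.mpr ⟨hf.connected_ofParentMap, ?_⟩
  rw [edgeSet_ofParentMap, Nat.card_image_of_injOn hinj, hnonfixed, Nat.card_coe_set_eq,
    ← Set.ncard_add_ncard_compl {r}, Set.ncard_singleton, add_comm]

end Function.IsRootedTree

namespace SimpleGraph

theorem IsTree.ofParentMap_parent {V : Type*} {G : SimpleGraph V} (hG : G.IsTree) (r : V) :
    ofParentMap (G.parent r) = G :=
  (isTree_iff_minimal_connected.mp hG).eq_of_le
    (hG.connected.isRootedTree_parent r).connected_ofParentMap (ofParentMap_parent_le r)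

theorem card_rootedTrees_eq_card_rootedForests_one (V : Type*) [Fintype V] :
    Nat.card {p : SimpleGraph V × V // p.1.IsTree} = #(rootedForests V 1) := by
  rw [← Nat.card_eq_finsetCard]
  refine Nat.card_eq_of_bijective (fun p => ⟨p.1.1.parent p.1.2,
    mem_rootedForests_one_iff.mpr ⟨_, p.2.connected.isRootedTree_parent _⟩⟩) ⟨?_, ?_⟩
  · rintro ⟨⟨G, r⟩, hG⟩ ⟨⟨G', r'⟩, hG'⟩ h
    have hpar : G.parent r = G'.parent r' := congrArg Subtype.val h
    have hr : r = r' :=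
      (hG'.connected.isRootedTree_parent r').isFixedPt_iff.mp (hpar ▸ parent_self r)
    subst hr
    refine Subtype.ext (Prod.ext ?_ rfl)
    calc G = ofParentMap (G.parent r) := (IsTree.ofParentMap_parent hG r).symm
      _ = G' := by rw [hpar, IsTree.ofParentMap_parent hG' r]
  · rintro ⟨f, hf⟩
    obtain ⟨r, hr⟩ := mem_rootedForests_one_iff.mp hf
    exact ⟨⟨(ofParentMap f, r), hr.isTree_ofParentMap⟩, Subtype.ext hr.parent_ofParentMap⟩

end SimpleGraph

/-- The number of rooted labeled trees on `n + 1` vertices (a tree together with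
a distinguished root vertex) equals `(n+1)^n`. -/
theorem rooted_trees_count (n : ℕ) :
    Nat.card {p : SimpleGraph (Fin (n + 1)) × Fin (n + 1) // p.1.IsTree}
      = (n + 1) ^ n := by
  rw [SimpleGraph.card_rootedTrees_eq_card_rootedForests_one,
    card_rootedForests_succ (Fintype.card_fin (n + 1)) n.zero_le]
  simp
end

section
/- For n ≥ 1, the total number of rooted labeled forests on n vertices (forests on an n-element vertex set together with a choice of one root in each component, with any number of components) equals (n+1)^(n-1). -/
open Finset

namespace RootedForests

variable {V R : Type}

def stp (f : V → V ⊕ R) : V ⊕ R → V ⊕ R := Sum.elim f Sum.inr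

def Good (f : V → V ⊕ R) : Prop := ∀ x : V, ∃ k, ((stp f)^[k] (Sum.inl x)).isRight

lemma stp_inl (f : V → V ⊕ R) (x : V) : stp f (Sum.inl x) = f x := rfl

lemma iter_succ (f : V → V ⊕ R) (k : ℕ) (x : V) :
    (stp f)^[k+1] (Sum.inl x) = (stp f)^[k] (f x) := by
  rw [Function.iterate_succ_apply, stp_inl]

lemma good_isEmpty [IsEmpty V] (f : V → V ⊕ R) : Good f := fun x => isEmptyElim x

lemma not_good_of_isEmpty_R [IsEmpty R] [Nonempty V] (f : V → V ⊕ R) : ¬ Good f := by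
  intro h
  obtain ⟨x⟩ := ‹Nonempty V›
  obtain ⟨k, hk⟩ := h x
  rcases hs : (stp f)^[k] (Sum.inl x) with v | r
  · rw [hs] at hk; simp at hk
  · exact isEmptyElim r

variable [Fintype V] [DecidableEq V]

/-- The set of vertices pointing directly to a sink. -/
def sinks (f : V → V ⊕ R) : Finset V := univ.filter (fun x => (f x).isRight)

lemma mem_sinks {f : V → V ⊕ R} {x : V} : x ∈ sinks f ↔ (f x).isRight := by
  simp [sinks]

section Recon

variable (S : Finset V)

/-- Reconstruct a parent function from the sink-map and the inner parent function. -/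
def recon (g : ↥S → R) (h : ↥(Sᶜ) → ↥(Sᶜ) ⊕ ↥S) (x : V) : V ⊕ R :=
  if hx : x ∈ S then Sum.inr (g ⟨x, hx⟩)
  else Sum.inl (Sum.elim Subtype.val Subtype.val (h ⟨x, by simpa using hx⟩))

lemma sinks_recon (g : ↥S → R) (h : ↥(Sᶜ) → ↥(Sᶜ) ⊕ ↥S) : sinks (recon S g h) = S := by
  ext x
  by_cases hx : x ∈ S <;> simp [mem_sinks, recon, hx]

lemma recon_good_aux (g : ↥S → R) (h : ↥(Sᶜ) → ↥(Sᶜ) ⊕ ↥S) :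
    ∀ (j : ℕ) (x : ↥(Sᶜ)), ((stp h)^[j] (Sum.inl x)).isRight →
      ∃ k, ((stp (recon S g h))^[k] (Sum.inl x.1)).isRight := by
  intro j
  induction j with
  | zero => intro x hx; simp at hx
  | succ j ih =>
    intro x hx
    have hxS : x.1 ∉ S := Finset.mem_compl.mp x.2
    rw [iter_succ] at hx
    rcases hh : h x with w | s
    · rw [hh] at hx
      obtain ⟨k, hk⟩ := ih w hx
      refine ⟨k + 1, ?_⟩
      rw [iter_succ]
      have : recon S g h x.1 = Sum.inl w.1 := by
        simp only [recon, dif_neg hxS]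
        congr 1
        rw [show (⟨x.1, by simpa using hxS⟩ : ↥(Sᶜ)) = x from rfl, hh]
        rfl
      rw [this]
      exact hk
    · refine ⟨2, ?_⟩
      have h1 : recon S g h x.1 = Sum.inl s.1 := by
        simp only [recon, dif_neg hxS]
        congr 1
        rw [show (⟨x.1, by simpa using hxS⟩ : ↥(Sᶜ)) = x from rfl, hh]
        rfl
      rw [iter_succ, h1, iter_succ]
      simp [recon, s.2]

lemma recon_good (g : ↥S → R) (h : ↥(Sᶜ) → ↥(Sᶜ) ⊕ ↥S) (hh : Good h) :
    Good (recon S g h) := by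
  intro x
  by_cases hx : x ∈ S
  · exact ⟨1, by simp [Function.iterate_one, stp_inl, recon, hx]⟩
  · obtain ⟨j, hj⟩ := hh ⟨x, by simpa using hx⟩
    exact recon_good_aux S g h j _ hj


variable {S : Finset V}

lemma recon_injective (g g' : ↥S → R) (h h' : ↥(Sᶜ) → ↥(Sᶜ) ⊕ ↥S)
    (he : recon S g h = recon S g' h') : g = g' ∧ h = h' := by
  constructor
  · funext s
    have := congrFun he s.1
    simpa [recon, s.2] using this
  · funext x
    have hx : x.1 ∉ S := Finset.mem_compl.mp x.2
    have := congrFun he x.1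
    simp only [recon, dif_neg hx] at this
    have hxx : (⟨x.1, by simpa using hx⟩ : ↥(Sᶜ)) = x := rfl
    rw [hxx] at this
    have h2 : Sum.elim (Subtype.val : ↥(Sᶜ) → V) Subtype.val (h x)
        = Sum.elim (Subtype.val : ↥(Sᶜ) → V) Subtype.val (h' x) := by
      exact Sum.inl.inj this
    rcases ha : h x with w | s <;> rcases hb : h' x with w' | s' <;>
      rw [ha, hb] at h2 <;> simp at h2
    · exact congrArg _ h2
    · exfalso; exact (Finset.mem_compl.mp w.2) (h2 ▸ s'.2)
    · exfalso; exact (Finset.mem_compl.mp w'.2) (h2 ▸ s.2)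
    · exact congrArg _ h2

end Recon

section Decompose

variable {S : Finset V}

lemma not_isRight_of_not_mem (f : V → V ⊕ R) (hs : sinks f = S) {x : V} (hx : x ∉ S) :
    ¬ (f x).isRight := by
  intro h
  exact hx (by rw [← hs]; exact mem_sinks.mpr h)

lemma isRight_of_mem (f : V → V ⊕ R) (hs : sinks f = S) {x : V} (hx : x ∈ S) :
    (f x).isRight := by
  have : x ∈ sinks f := by rw [hs]; exact hx
  exact mem_sinks.mp this

lemma isLeft_of_not_mem (f : V → V ⊕ R) (hs : sinks f = S) {x : V} (hx : x ∉ S) :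
    (f x).isLeft := by
  have := not_isRight_of_not_mem f hs hx
  rcases h : f x with w | r
  · simp
  · rw [h] at this; simp at this

/-- The sink-map of `f`. -/
noncomputable def gOf (f : V → V ⊕ R) (hs : sinks f = S) (s : ↥S) : R :=
  (f s.1).getRight (isRight_of_mem f hs s.2)

/-- The inner parent function of `f`. -/
noncomputable def hOf (f : V → V ⊕ R) (hs : sinks f = S) (x : ↥(Sᶜ)) : ↥(Sᶜ) ⊕ ↥S :=
  let v := (f x.1).getLeft (isLeft_of_not_mem f hs (Finset.mem_compl.mp x.2))
  if hv : v ∈ S then Sum.inr ⟨v, hv⟩ else Sum.inl ⟨v, Finset.mem_compl.mpr hv⟩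

lemma hOf_spec_mem (f : V → V ⊕ R) (hs : sinks f = S) (x : ↥(Sᶜ)) {v : V}
    (h : f x.1 = Sum.inl v) (hv : v ∈ S) : hOf f hs x = Sum.inr ⟨v, hv⟩ := by
  simp only [hOf]
  have hget : (f x.1).getLeft (isLeft_of_not_mem f hs (Finset.mem_compl.mp x.2)) = v := by
    simp [h]
  simp only [hget, dif_pos hv]

lemma hOf_spec_not_mem (f : V → V ⊕ R) (hs : sinks f = S) (x : ↥(Sᶜ)) {v : V}
    (h : f x.1 = Sum.inl v) (hv : v ∉ S) :
    hOf f hs x = Sum.inl ⟨v, Finset.mem_compl.mpr hv⟩ := by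
  simp only [hOf]
  have hget : (f x.1).getLeft (isLeft_of_not_mem f hs (Finset.mem_compl.mp x.2)) = v := by
    simp [h]
  simp only [hget, dif_neg hv]

lemma recon_gOf_hOf (f : V → V ⊕ R) (hs : sinks f = S) :
    recon S (gOf f hs) (hOf f hs) = f := by
  funext x
  by_cases hx : x ∈ S
  · rcases h : f x with v | r
    · have hr := isRight_of_mem f hs hx
      rw [h] at hr; simp at hr
    · simp only [recon, dif_pos hx, gOf]
      congr 1
      simp [h]
  · rcases h : f x with v | r
    swap
    · exact absurd (not_isRight_of_not_mem f hs hx) (by rw [h]; simp)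
    simp only [recon, dif_neg hx]
    set x' : ↥(Sᶜ) := ⟨x, Finset.mem_compl.mpr hx⟩ with hx'
    by_cases hv : v ∈ S
    · rw [hOf_spec_mem f hs x' h hv]; rfl
    · rw [hOf_spec_not_mem f hs x' h hv]; rfl

lemma good_hOf (f : V → V ⊕ R) (hs : sinks f = S) (hf : Good f) : Good (hOf f hs) := by
  have key : ∀ (k : ℕ) (x : V) (hx : x ∉ S), ((stp f)^[k] (Sum.inl x)).isRight →
      ∃ j, ((stp (hOf f hs))^[j] (Sum.inl ⟨x, Finset.mem_compl.mpr hx⟩)).isRight := by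
    intro k
    induction k with
    | zero => intro x hx h; simp at h
    | succ k ih =>
      intro x hx hk
      rw [iter_succ] at hk
      rcases h : f x with v | r
      swap
      · exact absurd (by rw [h]; rfl) (not_isRight_of_not_mem f hs hx)
      rw [h] at hk
      by_cases hv : v ∈ S
      · exact ⟨1, by
          simp only [Function.iterate_one, stp_inl,
            hOf_spec_mem f hs ⟨x, Finset.mem_compl.mpr hx⟩ h hv]
          rfl⟩
      · obtain ⟨j, hj⟩ := ih v hv hk
        exact ⟨j + 1, by
          rw [iter_succ, hOf_spec_not_mem f hs ⟨x, Finset.mem_compl.mpr hx⟩ h hv]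
          exact hj⟩
  intro x
  obtain ⟨k, hk⟩ := hf x.1
  obtain ⟨j, hj⟩ := key k x.1 (Finset.mem_compl.mp x.2) hk
  exact ⟨j, by
    have : (⟨x.1, Finset.mem_compl.mpr (Finset.mem_compl.mp x.2)⟩ : ↥(Sᶜ)) = x := rfl
    rwa [this] at hj⟩

end Decompose

section Count

/-- closed form for the number of good parent functions -/
def B (n m : ℕ) : ℕ := if n = 0 then 1 else m * (n + m) ^ (n - 1)

lemma nat_card_sigma {ι : Type} [Fintype ι] (β : ι → Type) [∀ i, Finite (β i)] :
    Nat.card (Σ i, β i) = ∑ i, Nat.card (β i) := by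
  letI : ∀ i, Fintype (β i) := fun i => Fintype.ofFinite _
  simp [Nat.card_eq_fintype_card, Fintype.card_sigma]

variable [Fintype R]

lemma card_fiber (S : Finset V) :
    Nat.card {p : {f : V → V ⊕ R // Good f} // sinks p.1 = S}
      = Fintype.card R ^ S.card * Nat.card {h : ↥(Sᶜ) → ↥(Sᶜ) ⊕ ↥S // Good h} := by
  have hb : Function.Bijective
      (fun gh : (↥S → R) × {h : ↥(Sᶜ) → ↥(Sᶜ) ⊕ ↥S // Good h} =>
        (⟨⟨recon S gh.1 gh.2.1, recon_good S gh.1 gh.2.1 gh.2.2⟩, sinks_recon S gh.1 gh.2.1⟩ :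
          {p : {f : V → V ⊕ R // Good f} // sinks p.1 = S})) := by
    constructor
    · rintro ⟨g, h, hh⟩ ⟨g', h', hh'⟩ he
      have he2 : recon S g h = recon S g' h' := by
        have := congrArg (fun p => p.1.1) he
        exact this
      obtain ⟨hg, hhh⟩ := recon_injective g g' h h' he2
      simp only [Prod.mk.injEq, hg, true_and]
      exact Subtype.ext hhh
    · rintro ⟨⟨f, hf⟩, hsf⟩
      refine ⟨⟨gOf f hsf, ⟨hOf f hsf, good_hOf f hsf hf⟩⟩, ?_⟩
      apply Subtype.ext
      apply Subtype.ext
      exact recon_gOf_hOf f hsf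
  rw [← Nat.card_eq_of_bijective _ hb, Nat.card_prod, Nat.card_fun]
  congr 2
  · simp [Nat.card_eq_fintype_card]
  · simp [Nat.card_eq_fintype_card]

lemma card_good_eq_sum :
    Nat.card {f : V → V ⊕ R // Good f}
      = ∑ S : Finset V, Nat.card {p : {f : V → V ⊕ R // Good f} // sinks p.1 = S} := by
  rw [← nat_card_sigma]
  exact (Nat.card_congr (Equiv.sigmaFiberEquiv (fun p : {f : V → V ⊕ R // Good f} =>
    sinks p.1))).symm

lemma card_good_of_isEmpty_V [IsEmpty V] :
    Nat.card {f : V → V ⊕ R // Good f} = 1 := by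
  rw [Nat.card_congr (Equiv.subtypeUnivEquiv good_isEmpty), Nat.card_fun]
  simp [Nat.card_eq_fintype_card]

lemma card_good_of_isEmpty_R [IsEmpty R] [Nonempty V] :
    Nat.card {f : V → V ⊕ R // Good f} = 0 := by
  have : IsEmpty {f : V → V ⊕ R // Good f} :=
    ⟨fun p => not_good_of_isEmpty_R p.1 p.2⟩
  exact Nat.card_of_isEmpty

lemma key_identity (N m : ℕ) :
    ∑ j ∈ Finset.range (N + 2),
        Nat.choose (N + 1) j * (m ^ j * (if j = 0 then 0 else B (N + 1 - j) j))
      = m * ((N + 1 + m) ^ N) := by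
  rw [Finset.sum_range_succ']
  have h0 : Nat.choose (N+1) 0 * (m ^ 0 * (if (0:ℕ) = 0 then 0 else B (N+1-0) 0)) = 0 := by
    simp
  rw [h0, add_zero]
  have hexp : (N + 1 + m) ^ N
      = ∑ i ∈ Finset.range (N+1), m ^ i * (N+1) ^ (N - i) * Nat.choose N i := by
    rw [show N + 1 + m = m + (N+1) by ring, add_pow]
    simp
  rw [hexp, Finset.mul_sum]
  apply Finset.sum_congr rfl
  intro i hi
  rw [Finset.mem_range] at hi
  simp only [if_neg (Nat.succ_ne_zero i)]
  rcases Nat.lt_or_ge i N with hiN | hiN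
  · have hNi : N - i ≠ 0 := by omega
    have hB : B (N+1 - (i+1)) (i+1) = (i+1) * (N+1) ^ (N - i - 1) := by
      have h1 : N + 1 - (i+1) = N - i := by omega
      rw [h1, B, if_neg hNi]
      have h2 : N - i + (i+1) = N + 1 := by omega
      rw [h2]
    rw [hB]
    have hc : Nat.choose (N+1) (i+1) * (i+1) = (N+1) * Nat.choose N i :=
      (Nat.add_one_mul_choose_eq N i).symm
    have hp : (N+1) * (N+1)^(N-i-1) = (N+1)^(N-i) := by
      rw [← pow_succ']
      congr 1
      omega
    calc Nat.choose (N+1) (i+1) * (m^(i+1) * ((i+1)*(N+1)^(N-i-1)))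
        = (Nat.choose (N+1) (i+1)*(i+1)) * (m^(i+1) * (N+1)^(N-i-1)) := by ring
      _ = (N+1) * Nat.choose N i * (m^(i+1) * (N+1)^(N-i-1)) := by rw [hc]
      _ = Nat.choose N i * (m^(i+1) * ((N+1) * (N+1)^(N-i-1))) := by ring
      _ = Nat.choose N i * (m^(i+1) * (N+1)^(N-i)) := by rw [hp]
      _ = m * (m^i * (N+1)^(N-i) * Nat.choose N i) := by rw [pow_succ]; ring
  · rw [show N + 1 - (i+1) = 0 from by omega, show N - i = 0 from by omega,
      show (N+1).choose (i+1) = 1 from by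
        rw [show i+1 = N+1 from by omega]; exact Nat.choose_self _,
      show N.choose i = 1 from by
        rw [show i = N from by omega]; exact Nat.choose_self _]
    simp [B, pow_succ]
    ring

theorem card_good_eq : ∀ (n : ℕ) (V R : Type) [Fintype V] [DecidableEq V] [Fintype R],
    Fintype.card V = n →
    Nat.card {f : V → V ⊕ R // Good f} = B n (Fintype.card R) := by
  intro n
  induction n using Nat.strong_induction_on with
  | _ n ih =>
  intro V R _ _ _ hV
  rcases Nat.eq_zero_or_pos n with hn | hn
  · subst hn
    haveI : IsEmpty V := Fintype.card_eq_zero_iff.mp hV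
    rw [card_good_of_isEmpty_V, B]
    simp
  · set m := Fintype.card R with hm
    rw [card_good_eq_sum]
    have hterm : ∀ S : Finset V,
        Nat.card {p : {f : V → V ⊕ R // Good f} // sinks p.1 = S}
          = m ^ S.card * (if S.card = 0 then 0 else B (n - S.card) S.card) := by
      intro S
      rw [card_fiber]
      congr 1
      by_cases hS : S = ∅
      · subst hS
        haveI : IsEmpty (↥(∅ : Finset V)) := ⟨fun x => absurd x.2 (Finset.notMem_empty _)⟩
        haveI : Nonempty (↥((∅ : Finset V)ᶜ)) := by
          have hne : Nonempty V := Fintype.card_pos_iff.mp (by omega)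
          obtain ⟨x⟩ := hne
          exact ⟨⟨x, by simp⟩⟩
        rw [card_good_of_isEmpty_R]
        simp
      · have hSc : S.card ≠ 0 := by simpa [Finset.card_eq_zero] using hS
        rw [if_neg hSc]
        have h1 : Fintype.card ↥(Sᶜ : Finset V) = n - S.card := by
          simp [Finset.card_compl, hV]
        have hlt : n - S.card < n := by
          have hpos : 0 < S.card := Nat.pos_of_ne_zero hSc
          omega
        rw [ih (n - S.card) hlt ↥(Sᶜ : Finset V) ↥S h1]
        congr 1
        simp
    rw [Finset.sum_congr rfl (fun S _ => hterm S)]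
    obtain ⟨N, rfl⟩ : ∃ N, n = N + 1 := ⟨n-1, by omega⟩
    calc ∑ S : Finset V, m ^ S.card * (if S.card = 0 then 0 else B (N+1 - S.card) S.card)
        = ∑ S ∈ (Finset.univ : Finset V).powerset,
            m ^ S.card * (if S.card = 0 then 0 else B (N+1 - S.card) S.card) := by
          rw [Finset.powerset_univ]
      _ = ∑ j ∈ Finset.range ((Finset.univ : Finset V).card + 1),
            ∑ S ∈ Finset.powersetCard j Finset.univ,
              m ^ S.card * (if S.card = 0 then 0 else B (N+1 - S.card) S.card) :=
          Finset.sum_powerset _ _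
      _ = ∑ j ∈ Finset.range (N + 2),
            Nat.choose (N+1) j * (m ^ j * (if j = 0 then 0 else B (N+1 - j) j)) := by
          rw [Finset.card_univ, hV]
          apply Finset.sum_congr rfl
          intro j hj
          rw [Finset.sum_congr rfl (fun S hS => by
            rw [(Finset.mem_powersetCard.mp hS).2]), Finset.sum_const,
            Finset.card_powersetCard, Finset.card_univ, hV, smul_eq_mul]
      _ = m * ((N + 1 + m) ^ N) := key_identity N m
      _ = B (N+1) m := by rw [B, if_neg (Nat.succ_ne_zero N)]; simp


end Count

section Graph

open SimpleGraph

variable {n : ℕ}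

/-- The forest graph of a parent function. -/
def graphOf (f : Fin n → Fin n ⊕ PUnit) : SimpleGraph (Fin n) where
  Adj x y := x ≠ y ∧ (f x = Sum.inl y ∨ f y = Sum.inl x)
  symm := by
    constructor
    rintro x y ⟨h1, h2⟩
    exact ⟨h1.symm, h2.symm⟩
  loopless := ⟨fun x h => h.1 rfl⟩

lemma graphOf_adj (f : Fin n → Fin n ⊕ PUnit) (x y : Fin n) :
    (graphOf f).Adj x y ↔ x ≠ y ∧ (f x = Sum.inl y ∨ f y = Sum.inl x) := Iff.rfl

variable {f : Fin n → Fin n ⊕ PUnit}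

/-- The number of steps to reach the sink. -/
noncomputable def dpt (hf : Good f) (x : Fin n) : ℕ := Nat.find (hf x)

lemma dpt_spec (hf : Good f) (x : Fin n) :
    ((stp f)^[dpt hf x] (Sum.inl x)).isRight := Nat.find_spec (hf x)

lemma dpt_pos (hf : Good f) (x : Fin n) : 0 < dpt hf x := by
  rcases Nat.eq_zero_or_pos (dpt hf x) with h | h
  · have h2 := dpt_spec hf x; rw [h] at h2; simp at h2
  · exact h

lemma dpt_step (hf : Good f) {x y : Fin n} (hxy : f x = Sum.inl y) :
    dpt hf x = dpt hf y + 1 := by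
  have hsh : ∀ k, (stp f)^[k+1] (Sum.inl x) = (stp f)^[k] (Sum.inl y) := by
    intro k; rw [iter_succ, hxy]
  apply le_antisymm
  · exact Nat.find_min' (hf x) (by rw [hsh]; exact dpt_spec hf y)
  · have h1 : 0 < dpt hf x := dpt_pos hf x
    have h2 := dpt_spec hf x
    rw [show dpt hf x = (dpt hf x - 1) + 1 from by omega, hsh] at h2
    have h3 : dpt hf y ≤ dpt hf x - 1 := Nat.find_min' (hf y) h2
    omega

lemma f_ne_inl_self (hf : Good f) (x : Fin n) : f x ≠ Sum.inl x := by
  intro h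
  have := dpt_step hf h
  omega

lemma adj_of_inl (hf : Good f) {x y : Fin n} (h : f x = Sum.inl y) :
    (graphOf f).Adj x y :=
  ⟨fun he => f_ne_inl_self hf x (he ▸ h), Or.inl h⟩

theorem graphOf_isAcyclic (hf : Good f) : (graphOf f).IsAcyclic := by
  intro v c hc
  have hvs : v ∈ c.support := c.start_mem_support
  obtain ⟨u, hu, hmax⟩ := Finset.exists_max_image c.support.toFinset (dpt hf)
    ⟨v, List.mem_toFinset.mpr hvs⟩
  rw [List.mem_toFinset] at hu
  have hmax' : ∀ z ∈ c.support, dpt hf z ≤ dpt hf u := fun z hz =>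
    hmax z (List.mem_toFinset.mpr hz)
  set c' := c.rotate u hu with hc'def
  have hc' : c'.IsCycle := hc.rotate hu
  have hsupp : ∀ z ∈ c'.support, z ∈ c.support := by
    intro z hz
    rw [Walk.support_eq_cons] at hz
    rcases List.mem_cons.mp hz with rfl | hz'
    · exact hu
    · have hperm := Walk.support_rotate c u hu
      have : z ∈ c.support.tail := hperm.mem_iff.mp hz'
      rw [Walk.support_eq_cons c]
      exact List.mem_cons_of_mem _ this
  obtain ⟨y, hadj, q, hq⟩ := Walk.not_nil_iff.mp hc'.not_nil
  have hy : y ∈ c'.support := by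
    rw [hq, Walk.support_cons]
    exact List.mem_cons_of_mem _ q.start_mem_support
  have hqlen : 2 ≤ q.length := by
    have h3 := hc'.three_le_length
    rw [hq] at h3
    simpa using h3
  have hqrev : ¬ q.reverse.Nil := by
    rw [Walk.not_nil_iff_lt_length]
    simpa using (by omega : 0 < q.length)
  obtain ⟨w, hadj2, q2, hq2⟩ := Walk.not_nil_iff.mp hqrev
  have hw : w ∈ c'.support := by
    have hw1 : w ∈ q.reverse.support := by
      rw [hq2, Walk.support_cons]
      exact List.mem_cons_of_mem _ q2.start_mem_support
    rw [Walk.support_reverse, List.mem_reverse] at hw1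
    rw [hq, Walk.support_cons]
    exact List.mem_cons_of_mem _ hw1
  have horient : ∀ z : Fin n, (graphOf f).Adj u z → z ∈ c.support → f u = Sum.inl z := by
    intro z hadjz hzc
    rcases hadjz.2 with h | h
    · exact h
    · exfalso
      have := dpt_step hf h
      have := hmax' z hzc
      omega
  have hfy : f u = Sum.inl y := horient y hadj (hsupp y hy)
  have hfw : f u = Sum.inl w := horient w hadj2 (hsupp w hw)
  have hyw : y = w := Sum.inl.inj (hfy ▸ hfw)
  have hedge : s(u, w) ∈ q.edges := by
    have h1 : s(u, w) ∈ q.reverse.edges := by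
      rw [hq2, Walk.edges_cons]
      exact List.mem_cons_self
    rwa [Walk.edges_reverse, List.mem_reverse] at h1
  have hnodup : c'.edges.Nodup := hc'.isTrail.edges_nodup
  rw [hq, Walk.edges_cons] at hnodup
  rw [← hyw] at hedge
  exact (List.nodup_cons.mp hnodup).1 hedge

lemma exists_root_reach (hf : Good f) :
    ∀ (d : ℕ) (x : Fin n), dpt hf x = d →
      ∃ r, f r = Sum.inr PUnit.unit ∧ (graphOf f).Reachable x r := by
  intro d
  induction d using Nat.strong_induction_on with
  | _ d ih =>
  intro x hd
  rcases hfx : f x with y | u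
  · have hstep := dpt_step hf hfx
    obtain ⟨r, hr, hreach⟩ := ih (dpt hf y) (by omega) y rfl
    exact ⟨r, hr, (adj_of_inl hf hfx).reachable.trans hreach⟩
  · exact ⟨x, by cases u; exact hfx, Reachable.refl x⟩

lemma chain (hf : Good f) : ∀ {a b : Fin n} (p : (graphOf f).Walk a b), p.IsPath →
    (∀ z, f a = Sum.inl z → z ∉ p.support.tail) → a ≠ b → ∃ c, f b = Sum.inl c := by
  intro a b p
  induction p with
  | nil => intro _ _ hab; exact absurd rfl hab
  | @cons a y b hadj q ih =>
    intro hp hstart _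
    have hfy : f y = Sum.inl a := by
      rcases hadj.2 with h | h
      · exact absurd (by
          rw [Walk.support_cons]
          simpa using q.start_mem_support) (hstart _ h)
      · exact h
    by_cases hvb : y = b
    · exact ⟨a, hvb ▸ hfy⟩
    · have hq : q.IsPath := ((Walk.cons_isPath_iff _ _).mp hp).1
      have hna : a ∉ q.support := ((Walk.cons_isPath_iff _ _).mp hp).2
      refine ih hq ?_ hvb
      intro z hz
      rw [hfy] at hz
      cases Sum.inl.inj hz
      exact fun hmem => hna (List.mem_of_mem_tail hmem)

lemma root_unique (hf : Good f) {r1 r2 : Fin n}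
    (h1 : f r1 = Sum.inr PUnit.unit) (h2 : f r2 = Sum.inr PUnit.unit)
    (hcomp : (graphOf f).Reachable r1 r2) : r1 = r2 := by
  by_contra hne
  obtain ⟨w⟩ := hcomp
  obtain ⟨c, hc⟩ := chain hf w.toPath.1 w.toPath.2
    (fun z hz => by rw [h1] at hz; simp at hz) hne
  rw [h2] at hc
  simp at hc

lemma sinks_eq_root {x : Fin n} : x ∈ sinks f ↔ f x = Sum.inr PUnit.unit := by
  rw [mem_sinks]
  rcases h : f x with y | u
  · simp
  · cases u; simp

lemma roots_spec (hf : Good f) :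
    ∀ c : (graphOf f).ConnectedComponent,
      ∃! r : Fin n, r ∈ sinks f ∧ (graphOf f).connectedComponentMk r = c := by
  intro c
  obtain ⟨x, rfl⟩ := c.exists_rep
  obtain ⟨r, hr, hreach⟩ := exists_root_reach hf (dpt hf x) x rfl
  refine ⟨r, ⟨sinks_eq_root.mpr hr, (ConnectedComponent.eq).mpr hreach.symm⟩, ?_⟩
  rintro r' ⟨hr', hcomp⟩
  exact root_unique hf (sinks_eq_root.mp hr') hr
    ((ConnectedComponent.eq).mp (hcomp.trans ((ConnectedComponent.eq).mpr hreach.symm).symm))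

lemma graph_inj {f f' : Fin n → Fin n ⊕ PUnit} (hf : Good f) (hf' : Good f')
    (hG : graphOf f = graphOf f') (hR : sinks f = sinks f') : f = f' := by
  suffices H : ∀ (d : ℕ) (x : Fin n), dpt hf x = d → f x = f' x by
    funext x; exact H _ x rfl
  intro d
  induction d using Nat.strong_induction_on with
  | _ d ih =>
  intro x hd
  rcases hx : f x with y | u
  · have hxs : x ∉ sinks f := by
      rw [sinks_eq_root, hx]; simp
    rw [hR] at hxs
    rcases hx2 : f' x with y' | u'
    swap
    · exact absurd ((@sinks_eq_root n f' x).mpr (by cases u'; exact hx2)) hxs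
    by_cases hyy : y' = y
    · rw [hyy]
    · exfalso
      have hadj : (graphOf f).Adj x y := adj_of_inl hf hx
      have hadj2 : (graphOf f').Adj x y := hG ▸ hadj
      have hfy' : f' y = Sum.inl x := by
        rcases hadj2.2 with h | h
        · exact absurd (Sum.inl.inj (hx2 ▸ h)) hyy
        · exact h
      have hstep := dpt_step hf hx
      have heq := ih (dpt hf y) (by omega) y rfl
      rw [hfy'] at heq
      have := dpt_step hf heq
      omega
  · cases u
    have hxs : x ∈ sinks f := sinks_eq_root.mpr hx
    rw [hR, sinks_eq_root] at hxs
    exact hxs.symm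

theorem graph_surj (G : SimpleGraph (Fin n)) (hA : G.IsAcyclic) (R : Finset (Fin n))
    (hR : ∀ c : G.ConnectedComponent,
      ∃! r : Fin n, r ∈ R ∧ G.connectedComponentMk r = c) :
    ∃ f : Fin n → Fin n ⊕ PUnit, Good f ∧ graphOf f = G ∧ sinks f = R := by
  classical
  choose rt hrt huniq using fun x : Fin n => hR (G.connectedComponentMk x)
  have hreach : ∀ x, G.Reachable x (rt x) := fun x =>
    ((ConnectedComponent.eq).mp (hrt x).2).symm
  have hrt_const : ∀ {x y : Fin n}, G.Reachable x y → rt x = rt y := by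
    intro x y hxy
    exact (huniq x (rt y)
      ⟨(hrt y).1, (hrt y).2.trans ((ConnectedComponent.eq).mpr hxy.symm)⟩).symm
  have hrt_mem : ∀ x, rt x ∈ R := fun x => (hrt x).1
  have hrtR : ∀ x ∈ R, rt x = x := fun x hx => (huniq x x ⟨hx, rfl⟩).symm
  let p : ∀ x : Fin n, G.Path x (rt x) := fun x => ((hreach x).some).toPath
  have hpne : ∀ x, x ∉ R → ¬ (p x).1.Nil := by
    intro x hx
    apply Walk.not_nil_of_ne
    intro he
    exact hx (he ▸ hrt_mem x)
  set f : Fin n → Fin n ⊕ PUnit := fun x =>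
    if x ∈ R then Sum.inr PUnit.unit else Sum.inl ((p x).1.getVert 1) with hfdef
  have hadj1 : ∀ (x) (hx : x ∉ R), G.Adj x ((p x).1.getVert 1) := fun x hx =>
    Walk.adj_snd (hpne x hx)
  have hPU : ∀ (x) (q : G.Walk x (rt x)), q.IsPath → q = (p x).1 := by
    intro x q hq
    exact congrArg Subtype.val (hA.path_unique ⟨q, hq⟩ (p x))
  have htail : ∀ (x) (hx : x ∉ R),
      (p ((p x).1.getVert 1)).1.length + 1 = (p x).1.length := by
    intro x hx
    set y := (p x).1.getVert 1 with hy
    have hrtxy : rt y = rt x := (hrt_const (hadj1 x hx).reachable).symm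
    have hcons := Walk.cons_tail_eq (p x).1 (hpne x hx)
    have htp : (p x).1.tail.IsPath := by
      have hp := (p x).2
      rw [← hcons] at hp
      exact ((Walk.cons_isPath_iff _ _).mp hp).1
    have hEq : ((p x).1.tail.copy rfl hrtxy.symm) = (p y).1 := by
      apply hPU
      simpa using htp
    have hlen := congrArg Walk.length hEq
    rw [Walk.length_copy] at hlen
    rw [← hlen]
    exact Walk.length_tail_add_one (hpne x hx)
  have hGood : Good f := by
    suffices H : ∀ (L : ℕ) (x), (p x).1.length = L →
        ∃ k, ((stp f)^[k] (Sum.inl x)).isRight by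
      intro x; exact H _ x rfl
    intro L
    induction L using Nat.strong_induction_on with
    | _ L ih =>
    intro x hL
    by_cases hx : x ∈ R
    · refine ⟨1, ?_⟩
      have : f x = Sum.inr PUnit.unit := by simp [hfdef, hx]
      simp [Function.iterate_one, stp_inl, this]
    · set y := (p x).1.getVert 1 with hy
      have hfx : f x = Sum.inl y := by simp [hfdef, hx, hy]
      have hlen := htail x hx
      rw [← hy] at hlen
      obtain ⟨k, hk⟩ := ih ((p y).1.length) (by omega) y rfl
      exact ⟨k + 1, by rw [iter_succ, hfx]; exact hk⟩
  have hsinks : sinks f = R := by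
    ext x
    rw [sinks_eq_root]
    by_cases hx : x ∈ R <;> simp [hfdef, hx]
  have hgraph : graphOf f = G := by
    have key : ∀ x y : Fin n, f x = Sum.inl y → G.Adj x y := by
      intro x y h
      have hx : x ∉ R := by
        intro hx; rw [hfdef] at h; simp [hx] at h
      have hgv : (p x).1.getVert 1 = y := by
        rw [hfdef] at h; simpa [hx] using h
      exact hgv ▸ hadj1 x hx
    ext x y
    rw [graphOf_adj]
    constructor
    · rintro ⟨hne, h | h⟩
      · exact key x y h
      · exact (key y x h).symm
    · intro hxy
      refine ⟨hxy.ne, ?_⟩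
      by_cases hxR : x ∈ R <;> by_cases hyR : y ∈ R
      · exfalso
        have h3 : rt x = rt y := hrt_const hxy.reachable
        rw [hrtR x hxR, hrtR y hyR] at h3
        exact hxy.ne h3
      · right
        have hrty : rt y = x := by
          rw [(hrt_const hxy.symm.reachable : rt y = rt x), hrtR x hxR]
        have hsingle : (Walk.cons hxy.symm Walk.nil).copy rfl hrty.symm = (p y).1 := by
          apply hPU
          simp [Walk.cons_isPath_iff, hxy.ne']
        have hgv : (p y).1.getVert 1 = x := by
          rw [← hsingle, Walk.getVert_copy]
          rfl
        simp [hfdef, hyR, hgv]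
      · left
        have hrtx : rt x = y := by
          rw [(hrt_const hxy.reachable : rt x = rt y), hrtR y hyR]
        have hsingle : (Walk.cons hxy Walk.nil).copy rfl hrtx.symm = (p x).1 := by
          apply hPU
          simp [Walk.cons_isPath_iff, hxy.ne]
        have hgv : (p x).1.getVert 1 = y := by
          rw [← hsingle, Walk.getVert_copy]
          rfl
        simp [hfdef, hxR, hgv]
      · have hrtxy : rt x = rt y := hrt_const hxy.reachable
        by_cases hxs : x ∈ (p y).1.support
        · right
          have ht := ((p y).2).takeUntil hxs
          have hsingle : ((p y).1.takeUntil x hxs) = Walk.cons hxy.symm Walk.nil := by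
            exact congrArg Subtype.val (hA.path_unique
              ⟨(p y).1.takeUntil x hxs, ht⟩
              ⟨Walk.cons hxy.symm Walk.nil, by simp [Walk.cons_isPath_iff, hxy.ne']⟩)
          have hspec := Walk.take_spec (p y).1 hxs
          rw [hsingle] at hspec
          have hgv : (p y).1.getVert 1 = x := by
            rw [← hspec]
            simp [Walk.cons_append, Walk.nil_append, Walk.getVert_cons_succ,
              Walk.getVert_zero]
          simp [hfdef, hyR, hgv]
        · left
          have hcons : (Walk.cons hxy (p y).1).copy rfl hrtxy.symm = (p x).1 := by
            apply hPU
            rw [Walk.isPath_copy]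
            exact (Walk.cons_isPath_iff _ _).mpr ⟨(p y).2, hxs⟩
          have hgv : (p x).1.getVert 1 = y := by
            rw [← hcons, Walk.getVert_copy]
            simp [Walk.getVert_cons_succ, Walk.getVert_zero]
          simp [hfdef, hxR, hgv]
  exact ⟨f, hGood, hgraph, hsinks⟩

end Graph

end RootedForests

/-- For `n ≥ 1`, the number of rooted labeled forests on an `n`-element vertex
set — acyclic graphs together with a set of roots containing exactly one root in
each connected component — equals `(n+1)^(n-1)`. -/
theorem rooted_forests_total_count (n : ℕ) (hn : 1 ≤ n) :
    Nat.card {p : SimpleGraph (Fin n) × Finset (Fin n) //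
        p.1.IsAcyclic ∧ ∀ c : p.1.ConnectedComponent,
          ∃! r : Fin n, r ∈ p.2 ∧ p.1.connectedComponentMk r = c}
      = (n + 1) ^ (n - 1) := by
  classical
  have hb : Function.Bijective
      (fun q : {f : Fin n → Fin n ⊕ PUnit // RootedForests.Good f} =>
        (⟨(RootedForests.graphOf q.1, RootedForests.sinks q.1),
          RootedForests.graphOf_isAcyclic q.2, RootedForests.roots_spec q.2⟩ :
          {p : SimpleGraph (Fin n) × Finset (Fin n) //
            p.1.IsAcyclic ∧ ∀ c : p.1.ConnectedComponent,
              ∃! r : Fin n, r ∈ p.2 ∧ p.1.connectedComponentMk r = c})) := by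
    constructor
    · rintro ⟨f1, h1⟩ ⟨f2, h2⟩ he
      have he2 := Subtype.ext_iff.mp he
      simp only [Prod.mk.injEq] at he2
      exact Subtype.ext (RootedForests.graph_inj h1 h2 he2.1 he2.2)
    · rintro ⟨⟨G, R⟩, hA, hR⟩
      obtain ⟨f, hGood, hgraph, hsinks⟩ := RootedForests.graph_surj G hA R hR
      refine ⟨⟨f, hGood⟩, ?_⟩
      apply Subtype.ext
      simp only [Prod.mk.injEq]
      exact ⟨hgraph, hsinks⟩
  rw [← Nat.card_eq_of_bijective _ hb,
    RootedForests.card_good_eq n (Fin n) PUnit (Fintype.card_fin n),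
    RootedForests.B, if_neg (by omega : ¬ n = 0)]
  simp
end
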